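/- arXiv:2001.02774 — 8 statements merged into one kernel-verified Lean document; each statement's English description precedes it below -/
import Mathlib

section
/- Let A be an m×n matrix over ℝ or ℂ, I a subset of row indices, J a subset of column indices, C = A(:,J), R = A(I,:), U = A(I,J). If rank(U) = rank(A), then A = C U⁺ R, where U⁺ denotes the Moore–Penrose pseudoinverse. -/
open Matrix

/-- The four Penrose conditions characterizing the Moore–Penrose pseudoinverse. -/
def IsMoorePenrose {a b : Type*} [Fintype a] [Fintype b] {𝕜 : Type*} [RCLike 𝕜]
    (U : Matrix a b 𝕜) (Up : Matrix b a 𝕜) : Prop :=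
  U * Up * U = U ∧ Up * U * Up = Up ∧ (U * Up)ᴴ = U * Up ∧ (Up * U)ᴴ = Up * U

/-- The Frobenius norm of a matrix. -/
noncomputable def frob {m n : ℕ} {𝕜 : Type*} [RCLike 𝕜] (A : Matrix (Fin m) (Fin n) 𝕜) : ℝ :=
  Real.sqrt (∑ i, ∑ j, ‖A i j‖ ^ 2)

/-- The `k`-th largest singular value (1-indexed) of a matrix: the square root of the
`k`-th largest eigenvalue of `Aᴴ * A`. -/
noncomputable def sval {m n : ℕ} {𝕜 : Type*} [RCLike 𝕜] (A : Matrix (Fin m) (Fin n) 𝕜)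
    (k : ℕ) : ℝ :=
  Real.sqrt (((List.ofFn (Matrix.isHermitian_conjTranspose_mul_self A).eigenvalues).insertionSort
    (· ≥ ·)).getD (k - 1) 0)

/-- The spectral (operator) norm of a matrix, i.e. its largest singular value. -/
noncomputable def spec {m n : ℕ} {𝕜 : Type*} [RCLike 𝕜] (A : Matrix (Fin m) (Fin n) 𝕜) : ℝ :=
  sval A 1

section Aux
variable {𝕜 : Type*} [Field 𝕜]

/-- factor A = B * X when col space of A is contained in col space of B -/
lemma exists_right_factor {m p q : Type*} [Fintype m] [Fintype p] [Fintype q] [DecidableEq q]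
    (A : Matrix m q 𝕜) (B : Matrix m p 𝕜)
    (h : LinearMap.range A.mulVecLin ≤ LinearMap.range B.mulVecLin) :
    ∃ X : Matrix p q 𝕜, A = B * X := by
  choose x hx using fun j => h (LinearMap.mem_range_self A.mulVecLin (Pi.single j 1))
  refine ⟨Matrix.of (fun k j => x j k), ?_⟩
  ext i j
  have h1 := congrFun (hx j) i
  simp only [Matrix.mulVecLin_apply, Matrix.mulVec_single, mul_one, Pi.smul_apply, Matrix.col_apply, MulOpposite.op_one, one_smul] at h1
  rw [Matrix.mul_apply]
  rw [← h1]
  simp [Matrix.mulVec, dotProduct]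

lemma range_mul_le {m p q : Type*} [Fintype p] [Fintype q] (A : Matrix m p 𝕜) (B : Matrix p q 𝕜) :
    LinearMap.range (A * B).mulVecLin ≤ LinearMap.range A.mulVecLin := by
  rw [Matrix.mulVecLin_mul]
  exact LinearMap.range_comp_le_range _ _

end Aux

lemma sel_right {𝕜 : Type*} [Field 𝕜] {m n q : Type*} [Fintype n] [DecidableEq n]
    (A : Matrix m n 𝕜) (f : q → n) :
    A.submatrix id f = A * (1 : Matrix n n 𝕜).submatrix id f := by
  ext i j
  rw [Matrix.mul_apply]
  simp [Matrix.one_apply, Matrix.submatrix_apply]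

lemma sel_left {𝕜 : Type*} [Field 𝕜] {m n p : Type*} [Fintype m] [DecidableEq m]
    (A : Matrix m n 𝕜) (f : p → m) :
    A.submatrix f id = (1 : Matrix m m 𝕜).submatrix f id * A := by
  ext i j
  rw [Matrix.mul_apply]
  simp [Matrix.one_apply, Matrix.submatrix_apply]


/-- If `rank U = rank A` then `A = C * U⁺ * R` (CUR decomposition). -/
theorem stmt0 {𝕜 : Type*} [RCLike 𝕜] {m n : ℕ}
    (A : Matrix (Fin m) (Fin n) 𝕜) (I : Finset (Fin m)) (J : Finset (Fin n))
    (C : Matrix (Fin m) {j // j ∈ J} 𝕜) (R : Matrix {i // i ∈ I} (Fin n) 𝕜)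
    (U : Matrix {i // i ∈ I} {j // j ∈ J} 𝕜)
    (hC : C = A.submatrix id (fun j => j.1))
    (hR : R = A.submatrix (fun i => i.1) id)
    (hU : U = A.submatrix (fun i => i.1) (fun j => j.1))
    (Up : Matrix {j // j ∈ J} {i // i ∈ I} 𝕜) (hUp : IsMoorePenrose U Up)
    (hrank : U.rank = A.rank) :
    A = C * Up * R := by
  classical
  set P : Matrix (Fin n) {j // j ∈ J} 𝕜 := (1 : Matrix (Fin n) (Fin n) 𝕜).submatrix id (fun j => j.1) with hP
  set Q : Matrix {i // i ∈ I} (Fin m) 𝕜 := (1 : Matrix (Fin m) (Fin m) 𝕜).submatrix (fun i => i.1) id with hQ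
  have hCAP : C = A * P := by rw [hC, sel_right]
  have hRQA : R = Q * A := by rw [hR, sel_left]
  have hUQC : U = Q * C := by
    rw [hC, ← sel_left, hU]
    ext i j; simp
  have hURP : U = R * P := by
    rw [hR, ← sel_right, hU]
    ext i j; simp
  -- rank chain
  have hrC : C.rank = A.rank := by
    have h1 : U.rank ≤ C.rank := by rw [hUQC]; exact Matrix.rank_mul_le_right _ _
    have h2 : C.rank ≤ A.rank := by rw [hCAP]; exact Matrix.rank_mul_le_left _ _
    omega
  have hrR : R.rank = A.rank := by
    have h1 : U.rank ≤ R.rank := by rw [hURP]; exact Matrix.rank_mul_le_left _ _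
    have h2 : R.rank ≤ A.rank := by rw [hRQA]; exact Matrix.rank_mul_le_right _ _
    omega
  -- col space equality ⇒ A = C * X
  have hle : LinearMap.range A.mulVecLin ≤ LinearMap.range C.mulVecLin := by
    have hle' : LinearMap.range C.mulVecLin ≤ LinearMap.range A.mulVecLin := by
      rw [hCAP]; exact range_mul_le A P
    exact le_of_eq (Submodule.eq_of_le_of_finrank_le hle' hrC.ge).symm
  obtain ⟨X, hX⟩ := exists_right_factor A C hle
  -- row space equality via transpose ⇒ A = Y * R
  have hleT : LinearMap.range Aᵀ.mulVecLin ≤ LinearMap.range Rᵀ.mulVecLin := by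
    have hle' : LinearMap.range Rᵀ.mulVecLin ≤ LinearMap.range Aᵀ.mulVecLin := by
      have : Rᵀ = Aᵀ * Qᵀ := by rw [hRQA, Matrix.transpose_mul]
      rw [this]; exact range_mul_le Aᵀ Qᵀ
    refine le_of_eq (Submodule.eq_of_le_of_finrank_le hle' ?_).symm
    show Aᵀ.rank ≤ Rᵀ.rank
    rw [Matrix.rank_transpose, Matrix.rank_transpose, hrR]
  obtain ⟨Yt, hYt⟩ := exists_right_factor Aᵀ Rᵀ hleT
  have hY : A = Ytᵀ * R := by
    have := congrArg Matrix.transpose hYt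
    rwa [Matrix.transpose_transpose, Matrix.transpose_mul, Matrix.transpose_transpose] at this
  set Y := Ytᵀ
  have hRUX : R = U * X := by
    rw [hUQC, Matrix.mul_assoc, ← hX, hRQA]
  have hCYU : C = Y * U := by
    rw [hURP, ← Matrix.mul_assoc, ← hY, hCAP]
  calc A = Y * R := hY
    _ = Y * (U * X) := by rw [← hRUX]
    _ = Y * ((U * Up * U) * X) := by rw [hUp.1]
    _ = (Y * U) * Up * (U * X) := by simp only [Matrix.mul_assoc]
    _ = C * Up * R := by rw [← hCYU, ← hRUX]
end

section
/- Let A be an m×n matrix, C = A(:,J), R = A(I,:), U = A(I,J). Then rank(U) = rank(A) if and only if rank(C) = rank(R) = rank(A). -/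
open Matrix

section Aux
variable {𝕜 : Type*} [Field 𝕜]

lemma rank_submatrix_left_le {l m n : Type*} [Fintype m] [Fintype n] [DecidableEq m]
    (A : Matrix m n 𝕜) (f : l → m) : (A.submatrix f id).rank ≤ A.rank := by
  have h : A.submatrix f id = ((1 : Matrix m m 𝕜).submatrix f id) * A := by
    ext i j
    simp [Matrix.mul_apply, Matrix.one_apply]
  rw [h]
  exact Matrix.rank_mul_le_right _ _

lemma rank_submatrix_right_le {l m n : Type*} [Fintype l] [Fintype n] [DecidableEq n]
    (A : Matrix m n 𝕜) (g : l → n) : (A.submatrix id g).rank ≤ A.rank := by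
  have h : A.submatrix id g = A * ((1 : Matrix n n 𝕜).submatrix id g) := by
    ext i j
    simp [Matrix.mul_apply, Matrix.one_apply]
  rw [h]
  exact Matrix.rank_mul_le_left _ _

end Aux

/-- `rank U = rank A ↔ (rank C = rank A ∧ rank R = rank A)`. -/
theorem stmt1 {𝕜 : Type*} [RCLike 𝕜] {m n : ℕ}
    (A : Matrix (Fin m) (Fin n) 𝕜) (I : Finset (Fin m)) (J : Finset (Fin n))
    (C : Matrix (Fin m) {j // j ∈ J} 𝕜) (R : Matrix {i // i ∈ I} (Fin n) 𝕜)
    (U : Matrix {i // i ∈ I} {j // j ∈ J} 𝕜)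
    (hC : C = A.submatrix id (fun j => j.1))
    (hR : R = A.submatrix (fun i => i.1) id)
    (hU : U = A.submatrix (fun i => i.1) (fun j => j.1)) :
    U.rank = A.rank ↔ (C.rank = A.rank ∧ R.rank = A.rank) := by
  -- basic inequalities
  have hCle : C.rank ≤ A.rank := by rw [hC]; exact rank_submatrix_right_le A _
  have hRle : R.rank ≤ A.rank := by rw [hR]; exact rank_submatrix_left_le A _
  have hUC : U = C.submatrix (fun i : {i // i ∈ I} => i.1) id := by
    rw [hU, hC]; rfl
  have hUR : U = R.submatrix id (fun j : {j // j ∈ J} => j.1) := by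
    rw [hU, hR]; rfl
  have hUleC : U.rank ≤ C.rank := by rw [hUC]; exact rank_submatrix_left_le C _
  have hUleR : U.rank ≤ R.rank := by rw [hUR]; exact rank_submatrix_right_le R _
  constructor
  · intro h
    exact ⟨le_antisymm hCle (h ▸ hUleC), le_antisymm hRle (h ▸ hUleR)⟩
  · rintro ⟨hCA, hRA⟩
    refine le_antisymm (hUleC.trans hCle) ?_
    -- C = A * E
    have hE : C = A * ((1 : Matrix (Fin n) (Fin n) 𝕜).submatrix id
        (fun j : {j // j ∈ J} => j.1)) := by
      rw [hC]
      ext i j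
      simp [Matrix.mul_apply, Matrix.one_apply]
    have hle : LinearMap.range C.mulVecLin ≤ LinearMap.range A.mulVecLin := by
      rw [hE, Matrix.mulVecLin_mul]
      exact LinearMap.range_comp_le_range _ _
    have heq : LinearMap.range C.mulVecLin = LinearMap.range A.mulVecLin :=
      Submodule.eq_of_le_of_finrank_le hle hCA.ge
    -- each column of A is in the range of C
    have hcol : ∀ j : Fin n, ∃ x, C.mulVec x = fun i => A i j := by
      intro j
      have : (fun i => A i j) ∈ LinearMap.range A.mulVecLin := by
        refine ⟨Pi.single j 1, ?_⟩
        ext i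
        simp [Matrix.mulVecLin_apply, Matrix.mulVec, dotProduct,
          Pi.single_apply, Finset.sum_ite_eq']
      rw [← heq] at this
      exact this
    choose x hx using hcol
    set X : Matrix {j // j ∈ J} (Fin n) 𝕜 := Matrix.of (fun k j => x j k) with hX
    have hRU : R = U * X := by
      ext i j
      have := congrFun (hx j) i.1
      simp only [Matrix.mulVec, dotProduct] at this
      rw [hR, hU]
      simp only [Matrix.mul_apply, Matrix.submatrix_apply, id_eq, hX, Matrix.of_apply]
      rw [← this]
      apply Finset.sum_congr rfl
      intro k _
      rw [hC]
      rfl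
    calc A.rank = R.rank := hRA.symm
      _ = (U * X).rank := by rw [hRU]
      _ ≤ U.rank := Matrix.rank_mul_le_left _ _
end

section
/- Let A be an m×n matrix, C = A(:,J), R = A(I,:), U = A(I,J). If rank(U) = rank(A), then A⁺ = R⁺ U C⁺. -/
open Matrix

section Aux
variable {𝕜 : Type*} [RCLike 𝕜]

/-- Uniqueness of the Moore–Penrose pseudoinverse. -/
theorem mp_unique {a b : Type*} [Fintype a] [Fintype b]
    (A : Matrix a b 𝕜) {X Y : Matrix b a 𝕜}
    (hX : IsMoorePenrose A X) (hY : IsMoorePenrose A Y) : X = Y := by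
  obtain ⟨hX1, hX2, hX3, hX4⟩ := hX
  obtain ⟨hY1, hY2, hY3, hY4⟩ := hY
  have hAX : A * X = A * Y := by
    calc A * X = (A * X)ᴴ := hX3.symm
    _ = ((A * Y * A) * X)ᴴ := by rw [hY1]
    _ = ((A * Y) * (A * X))ᴴ := by rw [Matrix.mul_assoc (A * Y)]
    _ = (A * X)ᴴ * (A * Y)ᴴ := conjTranspose_mul _ _
    _ = (A * X) * (A * Y) := by rw [hX3, hY3]
    _ = (A * X * A) * Y := by rw [Matrix.mul_assoc (A * X)]
    _ = A * Y := by rw [hX1]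
  have hXA : X * A = Y * A := by
    calc X * A = (X * A)ᴴ := hX4.symm
    _ = (X * (A * Y * A))ᴴ := by rw [hY1]
    _ = ((X * A) * (Y * A))ᴴ := by simp only [Matrix.mul_assoc]
    _ = (Y * A)ᴴ * (X * A)ᴴ := conjTranspose_mul _ _
    _ = (Y * A) * (X * A) := by rw [hX4, hY4]
    _ = Y * (A * X * A) := by simp only [Matrix.mul_assoc]
    _ = Y * A := by rw [hX1]
  calc X = X * A * X := hX2.symm
  _ = X * (A * Y) := by rw [Matrix.mul_assoc, hAX]
  _ = (Y * A) * Y := by rw [← Matrix.mul_assoc, hXA]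
  _ = Y := hY2

/-- If `P` fixes the columns of `B` and the range of `A` is contained in that of `B`,
then `P` fixes the columns of `A`. -/
theorem proj_fix {l m n : Type*} [Fintype l] [Fintype m] [Fintype n] [DecidableEq n]
    (P : Matrix m m 𝕜) (B : Matrix m l 𝕜) (A : Matrix m n 𝕜)
    (hPB : P * B = B)
    (hrange : LinearMap.range A.mulVecLin ≤ LinearMap.range B.mulVecLin) :
    P * A = A := by
  have hv : ∀ v, (P * A) *ᵥ v = A *ᵥ v := by
    intro v
    obtain ⟨w, hw⟩ := hrange (LinearMap.mem_range_self A.mulVecLin v)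
    simp only [Matrix.mulVecLin_apply] at hw
    rw [← Matrix.mulVec_mulVec, ← hw, Matrix.mulVec_mulVec, hPB, hw]
  ext i j
  have h1 := congrFun (hv (Pi.single j 1)) i
  simpa [Matrix.mulVec, dotProduct, Pi.single_apply, mul_ite] using h1

end Aux

/-- If `rank U = rank A` then `A⁺ = R⁺ * U * C⁺`. -/
theorem stmt3 {𝕜 : Type*} [RCLike 𝕜] {m n : ℕ}
    (A : Matrix (Fin m) (Fin n) 𝕜) (I : Finset (Fin m)) (J : Finset (Fin n))
    (C : Matrix (Fin m) {j // j ∈ J} 𝕜) (R : Matrix {i // i ∈ I} (Fin n) 𝕜)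
    (U : Matrix {i // i ∈ I} {j // j ∈ J} 𝕜)
    (hC : C = A.submatrix id (fun j => j.1))
    (hR : R = A.submatrix (fun i => i.1) id)
    (hU : U = A.submatrix (fun i => i.1) (fun j => j.1))
    (Ap : Matrix (Fin n) (Fin m) 𝕜) (hAp : IsMoorePenrose A Ap)
    (Cp : Matrix {j // j ∈ J} (Fin m) 𝕜) (hCp : IsMoorePenrose C Cp)
    (Rp : Matrix (Fin n) {i // i ∈ I} 𝕜) (hRp : IsMoorePenrose R Rp)
    (hrank : U.rank = A.rank) :
    Ap = Rp * U * Cp := by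
  classical
  set E : Matrix (Fin n) {j // j ∈ J} 𝕜 := Matrix.of fun k j => if j.1 = k then (1:𝕜) else 0 with hE
  set F : Matrix {i // i ∈ I} (Fin m) 𝕜 := Matrix.of fun i k => if i.1 = k then (1:𝕜) else 0 with hF
  have hCE : C = A * E := by
    subst hC; ext i j
    simp [hE, Matrix.mul_apply, eq_comm]
  have hRF : R = F * A := by
    subst hR; ext i j
    simp [hF, Matrix.mul_apply]
  have hUE : U = R * E := by
    subst hR hU; ext i j
    simp [hE, Matrix.mul_apply, eq_comm]
  have hUF : U = F * C := by
    subst hC hU; ext i j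
    simp [hF, Matrix.mul_apply]
  -- rank equalities
  have hrR : R.rank = A.rank := by
    refine le_antisymm ?_ ?_
    · rw [hRF]; exact Matrix.rank_mul_le_right F A
    · rw [← hrank, hUE]; exact Matrix.rank_mul_le_left R E
  have hrC : C.rank = A.rank := by
    refine le_antisymm ?_ ?_
    · rw [hCE]; exact Matrix.rank_mul_le_left A E
    · rw [← hrank, hUF]; exact Matrix.rank_mul_le_right F C
  -- A * (Rp * R) = A
  have hARR : A * (Rp * R) = A := by
    have hfix : (Rp * R) * Rᴴ = Rᴴ := by
      calc (Rp * R) * Rᴴ = (Rp * R)ᴴ * Rᴴ := by rw [hRp.2.2.2]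
      _ = (R * (Rp * R))ᴴ := (conjTranspose_mul _ _).symm
      _ = (R * Rp * R)ᴴ := by rw [Matrix.mul_assoc]
      _ = Rᴴ := by rw [hRp.1]
    have hle : LinearMap.range Rᴴ.mulVecLin ≤ LinearMap.range Aᴴ.mulVecLin := by
      have : Rᴴ = Aᴴ * Fᴴ := by rw [hRF, conjTranspose_mul]
      rw [this, Matrix.mulVecLin_mul]
      exact LinearMap.range_comp_le_range _ _
    have heq : LinearMap.range Aᴴ.mulVecLin = LinearMap.range Rᴴ.mulVecLin := by
      refine (Submodule.eq_of_le_of_finrank_le hle ?_).symm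
      have h1 : Aᴴ.rank = Rᴴ.rank := by
        open scoped ComplexOrder in
        rw [Matrix.rank_conjTranspose, Matrix.rank_conjTranspose, hrR]
      exact le_of_eq h1
    have h2 : (Rp * R) * Aᴴ = Aᴴ := proj_fix (Rp * R) Rᴴ Aᴴ hfix (le_of_eq heq)
    calc A * (Rp * R) = Aᴴᴴ * (Rp * R)ᴴ := by rw [conjTranspose_conjTranspose, hRp.2.2.2]
    _ = ((Rp * R) * Aᴴ)ᴴ := (conjTranspose_mul _ _).symm
    _ = Aᴴᴴ := by rw [h2]
    _ = A := conjTranspose_conjTranspose A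
  -- (C * Cp) * A = A
  have hCCA : (C * Cp) * A = A := by
    have hfix : (C * Cp) * C = C := hCp.1
    have hle : LinearMap.range C.mulVecLin ≤ LinearMap.range A.mulVecLin := by
      rw [hCE, Matrix.mulVecLin_mul]
      exact LinearMap.range_comp_le_range _ _
    have heq : LinearMap.range A.mulVecLin = LinearMap.range C.mulVecLin := by
      refine (Submodule.eq_of_le_of_finrank_le hle ?_).symm
      exact le_of_eq hrC.symm
    exact proj_fix (C * Cp) C A hfix (le_of_eq heq)
  -- compute A * X and X * A
  have hAX : A * (Rp * U * Cp) = C * Cp := by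
    calc A * (Rp * U * Cp) = (A * (Rp * R)) * E * Cp := by
          rw [hUE]; simp only [Matrix.mul_assoc]
    _ = (A * E) * Cp := by rw [hARR]
    _ = C * Cp := by rw [← hCE]
  have hXA : (Rp * U * Cp) * A = Rp * R := by
    calc (Rp * U * Cp) * A = Rp * (F * ((C * Cp) * A)) := by
          rw [hUF]; simp only [Matrix.mul_assoc]
    _ = Rp * (F * A) := by rw [hCCA]
    _ = Rp * R := by rw [← hRF]
  have hMP : IsMoorePenrose A (Rp * U * Cp) := by
    refine ⟨?_, ?_, ?_, ?_⟩
    · calc A * (Rp * U * Cp) * A = (C * Cp) * A := by rw [hAX]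
      _ = A := hCCA
    · calc (Rp * U * Cp) * A * (Rp * U * Cp) = (Rp * R) * (Rp * U * Cp) := by rw [hXA]
      _ = ((Rp * R * Rp) * U) * Cp := by simp only [Matrix.mul_assoc]
      _ = Rp * U * Cp := by rw [hRp.2.1]
    · rw [hAX]; exact hCp.2.2.1
    · rw [hXA]; exact hRp.2.2.2
  exact mp_unique A hAp hMP
end

section
/- Let A be an m×n matrix of rank k with stable rank r = ‖A‖_F²/‖A‖₂². For each column index j, the leverage score probability p_j^{lev,k} = (1/k)‖V_k(j,:)‖₂² satisfies p_j^{lev,k} ≥ (r/k) · ‖A(:,j)‖₂²/‖A‖_F². -/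
open Matrix

/-- Auxiliary: `Aᴴ * A = V * diagonal σ² * Vᴴ` from the SVD. -/
theorem stmt8_AhA {𝕜 : Type*} [RCLike 𝕜] {m n k : ℕ}
    (A : Matrix (Fin m) (Fin n) 𝕜)
    (W : Matrix (Fin m) (Fin k) 𝕜) (V : Matrix (Fin n) (Fin k) 𝕜) (σ : Fin k → ℝ)
    (hW : Wᴴ * W = 1)
    (hSVD : A = W * Matrix.diagonal (fun i => (σ i : 𝕜)) * Vᴴ) :
    Aᴴ * A = V * Matrix.diagonal (fun i => ((σ i ^ 2 : ℝ) : 𝕜)) * Vᴴ := by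
  have hD : (Matrix.diagonal fun i => (σ i : 𝕜))ᴴ = Matrix.diagonal fun i => (σ i : 𝕜) := by
    have h : (star fun i => ((σ i : 𝕜))) = fun i => ((σ i : 𝕜)) := by
      funext i
      simp [RCLike.conj_ofReal]
    rw [diagonal_conjTranspose, h]
  subst hSVD
  rw [conjTranspose_mul, conjTranspose_mul, conjTranspose_conjTranspose, hD]
  calc V * ((Matrix.diagonal fun i => (σ i : 𝕜)) * Wᴴ) * (W * Matrix.diagonal (fun i => (σ i : 𝕜)) * Vᴴ)
      = V * ((Matrix.diagonal fun i => (σ i : 𝕜)) * (Wᴴ * W) * Matrix.diagonal (fun i => (σ i : 𝕜))) * Vᴴ := by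
        simp only [Matrix.mul_assoc]
    _ = V * Matrix.diagonal (fun i => ((σ i ^ 2 : ℝ) : 𝕜)) * Vᴴ := by
        rw [hW, Matrix.mul_one, diagonal_mul_diagonal]
        congr 1
        congr 1
        funext i
        push_cast
        ring

/-- Auxiliary: column norms in terms of singular values and rows of `V`. -/
theorem stmt8_col {𝕜 : Type*} [RCLike 𝕜] {m n k : ℕ}
    (A : Matrix (Fin m) (Fin n) 𝕜)
    (W : Matrix (Fin m) (Fin k) 𝕜) (V : Matrix (Fin n) (Fin k) 𝕜) (σ : Fin k → ℝ)
    (hW : Wᴴ * W = 1)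
    (hSVD : A = W * Matrix.diagonal (fun i => (σ i : 𝕜)) * Vᴴ) (j : Fin n) :
    (∑ i, ‖A i j‖ ^ 2) = ∑ l, σ l ^ 2 * ‖V j l‖ ^ 2 := by
  have hAhA := stmt8_AhA A W V σ hW hSVD
  have h1 : ((∑ i, ‖A i j‖ ^ 2 : ℝ) : 𝕜) = (Aᴴ * A) j j := by
    rw [mul_apply]
    push_cast
    refine Finset.sum_congr rfl fun i _ => ?_
    rw [conjTranspose_apply]
    exact (RCLike.conj_mul (A i j)).symm
  have h2 : ((∑ l, σ l ^ 2 * ‖V j l‖ ^ 2 : ℝ) : 𝕜)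
      = (V * Matrix.diagonal (fun i => ((σ i ^ 2 : ℝ) : 𝕜)) * Vᴴ) j j := by
    rw [mul_apply, RCLike.ofReal_sum]
    refine Finset.sum_congr rfl fun l _ => ?_
    rw [mul_diagonal, conjTranspose_apply, RCLike.ofReal_mul, RCLike.ofReal_pow, RCLike.ofReal_pow,
      ← RCLike.mul_conj (V j l), RCLike.star_def]
    ring
  have h3 : ((∑ i, ‖A i j‖ ^ 2 : ℝ) : 𝕜) = ((∑ l, σ l ^ 2 * ‖V j l‖ ^ 2 : ℝ) : 𝕜) := by
    rw [h1, hAhA, ← h2]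
  exact_mod_cast h3

/-- Auxiliary: each `σ l ^ 2` is bounded by `spec A ^ 2`. -/
theorem stmt8_spec_ge {𝕜 : Type*} [RCLike 𝕜] {m n k : ℕ}
    (A : Matrix (Fin m) (Fin n) 𝕜)
    (W : Matrix (Fin m) (Fin k) 𝕜) (V : Matrix (Fin n) (Fin k) 𝕜) (σ : Fin k → ℝ)
    (hW : Wᴴ * W = 1) (hV : Vᴴ * V = 1) (hσ : ∀ i, 0 < σ i)
    (hSVD : A = W * Matrix.diagonal (fun i => (σ i : 𝕜)) * Vᴴ) (l : Fin k) :
    σ l ^ 2 ≤ spec A ^ 2 ∧ 0 ≤ ((List.ofFn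
      (Matrix.isHermitian_conjTranspose_mul_self A).eigenvalues).insertionSort (· ≥ ·)).getD 0 0 := by
  have hAhA := stmt8_AhA A W V σ hW hSVD
  set c : ℝ := σ l ^ 2 with hc
  -- the l-th column of V is an eigenvector of AᴴA with eigenvalue c
  set v : Fin n → 𝕜 := fun p => V p l with hv
  have hVll : (∑ p, (starRingEnd 𝕜) (V p l) * V p l) = 1 := by
    have := congrArg (fun M => M l l) hV
    simpa [mul_apply, conjTranspose_apply] using this
  have hv0 : v ≠ 0 := by
    intro h
    have h10 : (1 : 𝕜) = 0 := by
      rw [← hVll]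
      refine Finset.sum_eq_zero fun p _ => ?_
      have hp : V p l = 0 := congrFun h p
      simp [hp]
    exact one_ne_zero h10
  have heig : (Aᴴ * A) *ᵥ v = ((c : ℝ) : 𝕜) • v := by
    rw [hAhA]
    have hvs : v = V *ᵥ Pi.single l 1 := by
      funext p
      simp [hv, mulVec_single]
    rw [hvs, mulVec_mulVec]
    have : V * Matrix.diagonal (fun i => ((σ i ^ 2 : ℝ) : 𝕜)) * Vᴴ * V
        = V * Matrix.diagonal (fun i => ((σ i ^ 2 : ℝ) : 𝕜)) := by
      rw [Matrix.mul_assoc, hV, Matrix.mul_one]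
    rw [this]
    funext p
    simp [mulVec_single, mul_diagonal, hv, hc]
    ring
  -- hence c is in the real spectrum of AᴴA
  have hmem : c ∈ spectrum ℝ (Aᴴ * A) := by
    rw [← spectrum.algebraMap_mem_iff 𝕜]
    rw [spectrum.mem_iff]
    intro hunit
    rw [Matrix.isUnit_iff_isUnit_det] at hunit
    have hdet : (algebraMap 𝕜 (Matrix (Fin n) (Fin n) 𝕜) ((c : ℝ) : 𝕜) - Aᴴ * A).det = 0 := by
      rw [← Matrix.exists_mulVec_eq_zero_iff]
      refine ⟨v, hv0, ?_⟩
      rw [Matrix.sub_mulVec, heig]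
      rw [Algebra.algebraMap_eq_smul_one, Matrix.smul_mulVec, Matrix.one_mulVec]
      simp
    rw [hdet] at hunit
    exact (not_isUnit_zero) hunit
  -- so c equals some eigenvalue
  have hAA := Matrix.isHermitian_conjTranspose_mul_self A
  rw [hAA.spectrum_real_eq_range_eigenvalues] at hmem
  obtain ⟨i, hi⟩ := hmem
  -- the head of the sorted list dominates every eigenvalue
  set L := (List.ofFn hAA.eigenvalues).insertionSort (· ≥ ·) with hL
  have hmemL : hAA.eigenvalues i ∈ L := by
    rw [hL, List.mem_insertionSort]
    exact List.mem_ofFn.2 ⟨i, rfl⟩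
  have hsorted : L.Pairwise (· ≥ ·) := List.pairwise_insertionSort _ _
  have hge : c ≤ L.getD 0 0 := by
    cases hLc : L with
    | nil => rw [hLc] at hmemL; exact absurd hmemL List.not_mem_nil
    | cons a t =>
      rw [hLc] at hmemL hsorted
      have : a ≥ hAA.eigenvalues i := by
        rcases List.mem_cons.1 hmemL with h | h
        · exact h.le
        · exact List.rel_of_pairwise_cons hsorted h
      simpa [hi] using this
  have hc0 : 0 < c := by
    have := hσ l
    positivity
  have h0L : 0 ≤ L.getD 0 0 := le_trans hc0.le hge
  constructor
  · have hspec : spec A ^ 2 = L.getD 0 0 := by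
      rw [spec, sval]
      simp only [Nat.sub_self]
      rw [Real.sq_sqrt h0L]
    rw [hspec]
    exact hge
  · exact h0L

/-- Leverage score probabilities dominate (r/k) times column-length probabilities. -/
theorem stmt8 {𝕜 : Type*} [RCLike 𝕜] {m n k : ℕ}
    (A : Matrix (Fin m) (Fin n) 𝕜) (hrank : A.rank = k)
    (W : Matrix (Fin m) (Fin k) 𝕜) (V : Matrix (Fin n) (Fin k) 𝕜) (σ : Fin k → ℝ)
    (hW : Wᴴ * W = 1) (hV : Vᴴ * V = 1) (hσ : ∀ i, 0 < σ i)
    (hSVD : A = W * Matrix.diagonal (fun i => (σ i : 𝕜)) * Vᴴ) (j : Fin n) :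
    (1 / (k : ℝ)) * ∑ i, ‖V j i‖ ^ 2 ≥
      (frob A ^ 2 / spec A ^ 2) / (k : ℝ) * ((∑ i, ‖A i j‖ ^ 2) / frob A ^ 2) := by
  rcases Nat.eq_zero_or_pos k with hk | hk
  · subst hk
    norm_num
  -- column norm identity
  have hcol : ∀ j' : Fin n, (∑ i, ‖A i j'‖ ^ 2) = ∑ l, σ l ^ 2 * ‖V j' l‖ ^ 2 :=
    fun j' => stmt8_col A W V σ hW hSVD j'
  -- columns of V are unit vectors
  have hVcol : ∀ l, (∑ p, ‖V p l‖ ^ 2) = 1 := by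
    intro l
    have h := congrArg (fun M => M l l) hV
    simp only [mul_apply, conjTranspose_apply, one_apply_eq] at h
    have h2 : ((∑ p, ‖V p l‖ ^ 2 : ℝ) : 𝕜) = ((1 : ℝ) : 𝕜) := by
      rw [RCLike.ofReal_sum, RCLike.ofReal_one, ← h]
      refine Finset.sum_congr rfl fun p _ => ?_
      rw [RCLike.ofReal_pow]
      exact (RCLike.conj_mul (V p l)).symm
    exact_mod_cast h2
  -- Frobenius norm squared equals the sum of squared singular values
  have hfrob : frob A ^ 2 = ∑ l, σ l ^ 2 := by
    have h0 : frob A ^ 2 = ∑ i, ∑ j', ‖A i j'‖ ^ 2 := Real.sq_sqrt (by positivity)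
    rw [h0, Finset.sum_comm]
    calc ∑ j', ∑ i, ‖A i j'‖ ^ 2 = ∑ j' : Fin n, ∑ l, σ l ^ 2 * ‖V j' l‖ ^ 2 :=
          Finset.sum_congr rfl fun j' _ => hcol j'
      _ = ∑ l, σ l ^ 2 * ∑ j' : Fin n, ‖V j' l‖ ^ 2 := by
          rw [Finset.sum_comm]
          exact Finset.sum_congr rfl fun l _ => (Finset.mul_sum _ _ _).symm
      _ = ∑ l, σ l ^ 2 := Finset.sum_congr rfl fun l _ => by rw [hVcol l, mul_one]
  have hF : 0 < frob A ^ 2 := by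
    rw [hfrob]
    refine Finset.sum_pos (fun l _ => by have := hσ l; positivity) ?_
    have : Nonempty (Fin k) := Fin.pos_iff_nonempty.1 hk
    exact Finset.univ_nonempty
  have hPσ : ∀ l, σ l ^ 2 ≤ spec A ^ 2 :=
    fun l => (stmt8_spec_ge A W V σ hW hV hσ hSVD l).1
  have hP : 0 < spec A ^ 2 := by
    have l0 : Fin k := ⟨0, hk⟩
    have := hσ l0
    calc (0:ℝ) < σ l0 ^ 2 := by positivity
      _ ≤ spec A ^ 2 := hPσ l0
  set S := ∑ i, ‖V j i‖ ^ 2 with hS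
  have hS0 : 0 ≤ S := Finset.sum_nonneg fun i _ => by positivity
  have hC : (∑ i, ‖A i j‖ ^ 2) ≤ spec A ^ 2 * S := by
    rw [hcol j, hS, Finset.mul_sum]
    refine Finset.sum_le_sum fun l _ => ?_
    exact mul_le_mul_of_nonneg_right (hPσ l) (by positivity)
  have hk' : (k : ℝ) ≠ 0 := Nat.cast_ne_zero.2 hk.ne'
  have hrhs : (frob A ^ 2 / spec A ^ 2) / (k : ℝ) * ((∑ i, ‖A i j‖ ^ 2) / frob A ^ 2)
      = (∑ i, ‖A i j‖ ^ 2) / (spec A ^ 2 * k) := by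
    have hfA : frob A ≠ 0 := fun h => by simp [h] at hF
    field_simp
  rw [ge_iff_le, hrhs, div_le_iff₀ (by positivity)]
  calc (∑ i, ‖A i j‖ ^ 2) ≤ spec A ^ 2 * S := hC
    _ = 1 / (k:ℝ) * S * (spec A ^ 2 * k) := by field_simp
end

section
/- Let A be an m×n matrix of rank k with stable rank r and condition number κ(A) = σ₁(A)/σ_k(A). For each column index j, ‖A(:,j)‖₂²/‖A‖_F² ≥ (k/(r·κ(A)²)) · p_j^{lev,k}, where p_j^{lev,k} = (1/k)‖V_k(j,:)‖₂². -/
open Matrix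

private lemma arith_aux (num F s a b S : ℝ) (k : ℕ) (hk : 0 < k) (hF : 0 < F) (ha : 0 < a)
    (hb : 0 < b) (hs0 : 0 ≤ s) (hsa : s ≤ a ^ 2) (hS : 0 ≤ S) (hnum : b ^ 2 * S ≤ num) :
    num / F ≥ (k : ℝ) / ((F / s) * (a / b) ^ 2) * ((1 / (k : ℝ)) * S) := by
  have hnum0 : 0 ≤ num := le_trans (by positivity) hnum
  rcases eq_or_lt_of_le hs0 with hs | hs
  · rw [← hs]
    simp only [div_zero, zero_mul, mul_zero]
    positivity
  · have hkR : (0 : ℝ) < k := Nat.cast_pos.mpr hk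
    have hRHS : (k : ℝ) / ((F / s) * (a / b) ^ 2) * ((1 / (k : ℝ)) * S)
        = S * s * b ^ 2 / (F * a ^ 2) := by
      field_simp
    rw [hRHS, ge_iff_le, div_le_div_iff₀ (by positivity) hF]
    nlinarith [mul_le_mul_of_nonneg_right hnum (le_of_lt (mul_pos hF (mul_pos ha ha))),
      mul_nonneg (sub_nonneg.mpr hsa)
        (mul_nonneg (mul_nonneg hS (by positivity : (0:ℝ) ≤ b ^ 2)) (le_of_lt hF))]

open scoped ComplexOrder in
private lemma eig_bound {𝕜 : Type*} [RCLike 𝕜] {m n k : ℕ} (hk : 0 < k)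
    (A : Matrix (Fin m) (Fin n) 𝕜) (V : Matrix (Fin n) (Fin k) 𝕜) (σ : Fin k → ℝ)
    (hV : Vᴴ * V = 1) (hσ : ∀ i, 0 < σ i) (hdec : Antitone σ)
    (hAHA : Aᴴ * A = V * Matrix.diagonal (fun l => ((σ l ^ 2 : ℝ) : 𝕜)) * Vᴴ) :
    ∀ i, (Matrix.isHermitian_conjTranspose_mul_self A).eigenvalues i ≤ σ ⟨0, hk⟩ ^ 2 := by
  have hVV : Vᴴ * (V * Vᴴ) = Vᴴ := by rw [← Matrix.mul_assoc, hV, Matrix.one_mul]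
  have hPH : (V * Vᴴ)ᴴ = V * Vᴴ := by
    rw [Matrix.conjTranspose_mul, Matrix.conjTranspose_conjTranspose]
  have hPP : (V * Vᴴ) * (V * Vᴴ) = V * Vᴴ := by rw [Matrix.mul_assoc, hVV]
  have hdiagc : (Matrix.diagonal (fun _ : Fin n => ((σ ⟨0, hk⟩ ^ 2 : ℝ) : 𝕜))).PosSemidef :=
    Matrix.posSemidef_diagonal_iff.mpr fun _ => RCLike.ofReal_nonneg.mpr (sq_nonneg _)
  have e1 : (((1 : Matrix (Fin n) (Fin n) 𝕜) - V * Vᴴ)ᴴ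
      * Matrix.diagonal (fun _ : Fin n => ((σ ⟨0, hk⟩ ^ 2 : ℝ) : 𝕜))
      * (1 - V * Vᴴ)).PosSemidef := hdiagc.conjTranspose_mul_mul_same _
  have hd2 : (Matrix.diagonal
      (fun l : Fin k => ((σ ⟨0, hk⟩ ^ 2 - σ l ^ 2 : ℝ) : 𝕜))).PosSemidef :=
    Matrix.posSemidef_diagonal_iff.mpr fun l => by
      refine RCLike.ofReal_nonneg.mpr ?_
      have hle : σ l ≤ σ ⟨0, hk⟩ := hdec (by simp [Fin.le_def])
      nlinarith [hσ l]
  have e2 : (V * Matrix.diagonal (fun l : Fin k => ((σ ⟨0, hk⟩ ^ 2 - σ l ^ 2 : ℝ) : 𝕜))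
      * Vᴴ).PosSemidef := hd2.mul_mul_conjTranspose_same V
  have hid : ((σ ⟨0, hk⟩ ^ 2 : ℝ) : 𝕜) • (1 : Matrix (Fin n) (Fin n) 𝕜) - Aᴴ * A
      = ((1 : Matrix (Fin n) (Fin n) 𝕜) - V * Vᴴ)ᴴ
          * Matrix.diagonal (fun _ : Fin n => ((σ ⟨0, hk⟩ ^ 2 : ℝ) : 𝕜)) * (1 - V * Vᴴ)
        + V * Matrix.diagonal (fun l : Fin k => ((σ ⟨0, hk⟩ ^ 2 - σ l ^ 2 : ℝ) : 𝕜)) * Vᴴ := by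
    have hconst : Matrix.diagonal (fun _ : Fin n => ((σ ⟨0, hk⟩ ^ 2 : ℝ) : 𝕜))
        = ((σ ⟨0, hk⟩ ^ 2 : ℝ) : 𝕜) • (1 : Matrix (Fin n) (Fin n) 𝕜) :=
      (Matrix.smul_one_eq_diagonal _).symm
    have hdiag2 : Matrix.diagonal (fun l : Fin k => ((σ ⟨0, hk⟩ ^ 2 - σ l ^ 2 : ℝ) : 𝕜))
        = ((σ ⟨0, hk⟩ ^ 2 : ℝ) : 𝕜) • (1 : Matrix (Fin k) (Fin k) 𝕜)
          - Matrix.diagonal (fun l : Fin k => ((σ l ^ 2 : ℝ) : 𝕜)) := by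
      rw [Matrix.smul_one_eq_diagonal, Matrix.diagonal_sub]
      congr 1
      funext l
      push_cast
      ring
    rw [Matrix.conjTranspose_sub, Matrix.conjTranspose_one, hPH, hconst, hdiag2, hAHA]
    simp only [Matrix.sub_mul, Matrix.mul_sub, Matrix.one_mul, Matrix.mul_one,
      Matrix.mul_smul, Matrix.smul_mul, Matrix.mul_assoc, hVV, hPP, smul_sub, smul_add,
      smul_zero, one_smul]
    abel
  have hPSD : (((σ ⟨0, hk⟩ ^ 2 : ℝ) : 𝕜) • (1 : Matrix (Fin n) (Fin n) 𝕜)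
      - Aᴴ * A).PosSemidef := by
    rw [hid]; exact e1.add e2
  intro i
  set hH := Matrix.isHermitian_conjTranspose_mul_self A with hHdef
  have hnorm : ∑ x, ‖(hH.eigenvectorBasis i) x‖ ^ 2 = 1 := by
    have h1 : ‖hH.eigenvectorBasis i‖ = 1 := hH.eigenvectorBasis.orthonormal.1 i
    have h2 := EuclideanSpace.norm_eq (hH.eigenvectorBasis i)
    have h3 : (0:ℝ) ≤ ∑ x, ‖(hH.eigenvectorBasis i) x‖ ^ 2 := by positivity
    have h4 := Real.sq_sqrt h3
    rw [← h2, h1] at h4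
    linarith
  have hd : dotProduct (star ⇑(hH.eigenvectorBasis i)) ⇑(hH.eigenvectorBasis i)
      = 1 := by
    calc (∑ x, (star ⇑(hH.eigenvectorBasis i)) x * (hH.eigenvectorBasis i) x)
        = ((∑ x, ‖(hH.eigenvectorBasis i) x‖ ^ 2 : ℝ) : 𝕜) := by
          push_cast
          refine Finset.sum_congr rfl fun x _ => ?_
          simp only [Pi.star_apply, RCLike.star_def]
          rw [RCLike.conj_mul]
      _ = 1 := by rw [hnorm]; norm_num
  have h0 := hPSD.re_dotProduct_nonneg ⇑(hH.eigenvectorBasis i)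
  rw [Matrix.sub_mulVec, dotProduct_sub, map_sub, Matrix.smul_mulVec,
    Matrix.one_mulVec, dotProduct_smul, hd, smul_eq_mul, mul_one,
    ← hH.eigenvalues_eq i, RCLike.ofReal_re] at h0
  linarith

/-- Column-length probabilities dominate (k/(r κ²)) times leverage score probabilities. -/
theorem stmt9 {𝕜 : Type*} [RCLike 𝕜] {m n k : ℕ} (hk : 0 < k)
    (A : Matrix (Fin m) (Fin n) 𝕜) (hrank : A.rank = k)
    (W : Matrix (Fin m) (Fin k) 𝕜) (V : Matrix (Fin n) (Fin k) 𝕜) (σ : Fin k → ℝ)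
    (hW : Wᴴ * W = 1) (hV : Vᴴ * V = 1) (hσ : ∀ i, 0 < σ i) (hdec : Antitone σ)
    (hSVD : A = W * Matrix.diagonal (fun i => (σ i : 𝕜)) * Vᴴ) (j : Fin n) :
    (∑ i, ‖A i j‖ ^ 2) / frob A ^ 2 ≥
      (k : ℝ) / ((frob A ^ 2 / spec A ^ 2) * (σ ⟨0, hk⟩ / σ ⟨k - 1, by omega⟩) ^ 2) *
        ((1 / (k : ℝ)) * ∑ i, ‖V j i‖ ^ 2) := by
  -- The Gram matrix identity AᴴA = V Σ² Vᴴ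
  have hDH : (Matrix.diagonal (fun i => (σ i : 𝕜)))ᴴ = Matrix.diagonal (fun i => (σ i : 𝕜)) := by
    rw [Matrix.diagonal_conjTranspose]
    have : (star fun i => ((σ i : 𝕜))) = fun i => ((σ i : 𝕜)) :=
      funext fun i => RCLike.conj_ofReal (σ i)
    rw [this]
  have hAHA : Aᴴ * A = V * Matrix.diagonal (fun l => ((σ l ^ 2 : ℝ) : 𝕜)) * Vᴴ := by
    rw [hSVD]
    simp only [conjTranspose_mul, hDH, conjTranspose_conjTranspose]
    have h1 : Wᴴ * (W * (Matrix.diagonal (fun i => (σ i : 𝕜)) * Vᴴ))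
        = Matrix.diagonal (fun i => (σ i : 𝕜)) * Vᴴ := by
      rw [← Matrix.mul_assoc, hW, Matrix.one_mul]
    simp only [Matrix.mul_assoc, h1]
    rw [← Matrix.mul_assoc (Matrix.diagonal _) (Matrix.diagonal _), Matrix.diagonal_mul_diagonal]
    congr 2
    funext i
    push_cast
    ring
  -- column norms
  have hcol : ∀ jj : Fin n, (∑ i, ‖A i jj‖ ^ 2) = ∑ l, σ l ^ 2 * ‖V jj l‖ ^ 2 := by
    intro jj
    have h1 : ((∑ i, ‖A i jj‖ ^ 2 : ℝ) : 𝕜) = (Aᴴ * A) jj jj := by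
      rw [Matrix.mul_apply]
      push_cast
      refine Finset.sum_congr rfl fun i _ => ?_
      rw [Matrix.conjTranspose_apply, RCLike.star_def, RCLike.conj_mul]
    have h2 : (Aᴴ * A) jj jj = ((∑ l, σ l ^ 2 * ‖V jj l‖ ^ 2 : ℝ) : 𝕜) := by
      rw [hAHA, Matrix.mul_apply]
      push_cast
      refine Finset.sum_congr rfl fun l _ => ?_
      rw [Matrix.mul_diagonal, Matrix.conjTranspose_apply]
      rw [RCLike.star_def]
      have : V jj l * ((σ l : 𝕜) ^ 2) * (starRingEnd 𝕜) (V jj l)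
          = (σ l : 𝕜) ^ 2 * (V jj l * (starRingEnd 𝕜) (V jj l)) := by ring
      rw [this, RCLike.mul_conj]
    exact_mod_cast h1.trans h2
  -- columns of V are unit vectors
  have hVcol : ∀ l : Fin k, (∑ jj, ‖V jj l‖ ^ 2) = 1 := by
    intro l
    have h1 : (Vᴴ * V) l l = 1 := by rw [hV]; simp
    rw [Matrix.mul_apply] at h1
    have h2 : ((∑ jj, ‖V jj l‖ ^ 2 : ℝ) : 𝕜) = 1 := by
      rw [← h1]
      push_cast
      refine Finset.sum_congr rfl fun jj _ => ?_
      rw [Matrix.conjTranspose_apply, RCLike.star_def, RCLike.conj_mul]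
    exact_mod_cast h2
  -- Frobenius norm
  have hfrob : frob A ^ 2 = ∑ l, σ l ^ 2 := by
    have h0 : frob A ^ 2 = ∑ i, ∑ jj, ‖A i jj‖ ^ 2 := Real.sq_sqrt (by positivity)
    rw [h0, Finset.sum_comm]
    calc (∑ jj : Fin n, ∑ i, ‖A i jj‖ ^ 2) = ∑ jj : Fin n, ∑ l, σ l ^ 2 * ‖V jj l‖ ^ 2 :=
          Finset.sum_congr rfl fun jj _ => hcol jj
      _ = ∑ l, ∑ jj : Fin n, σ l ^ 2 * ‖V jj l‖ ^ 2 := Finset.sum_comm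
      _ = ∑ l, σ l ^ 2 := by
          refine Finset.sum_congr rfl fun l _ => ?_
          rw [← Finset.mul_sum, hVcol l, mul_one]
  have hF : 0 < frob A ^ 2 := by
    rw [hfrob]
    exact Finset.sum_pos (fun l _ => pow_pos (hσ l) 2)
      (Finset.univ_nonempty_iff.mpr ⟨⟨0, hk⟩⟩)
  -- spectral norm bound
  have heig := eig_bound hk A V σ hV hσ hdec hAHA
  have hspec : spec A ^ 2 ≤ σ ⟨0, hk⟩ ^ 2 := by
    unfold spec sval
    set L := ((List.ofFn (Matrix.isHermitian_conjTranspose_mul_self A).eigenvalues).insertionSort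
      (· ≥ ·)) with hL
    have hlen : 0 < L.length := by
      rw [hL, List.length_insertionSort, List.length_ofFn]
      exact j.pos
    have hmem : L.getD (1 - 1) 0 ∈ L := by
      rw [List.getD_eq_getElem L 0 hlen]
      exact List.getElem_mem hlen
    have hmem2 : L.getD (1 - 1) 0
        ∈ List.ofFn (Matrix.isHermitian_conjTranspose_mul_self A).eigenvalues :=
      (List.perm_insertionSort _ _).mem_iff.mp hmem
    obtain ⟨i, hi⟩ := List.mem_ofFn.mp hmem2
    rw [Real.sq_sqrt, ← hi]
    · exact heig i
    · rw [← hi]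
      exact Matrix.eigenvalues_conjTranspose_mul_self_nonneg A i
  -- lower bound on column mass
  have hS : (0:ℝ) ≤ ∑ i, ‖V j i‖ ^ 2 := by positivity
  have hnum : σ ⟨k - 1, by omega⟩ ^ 2 * (∑ i, ‖V j i‖ ^ 2) ≤ ∑ l, σ l ^ 2 * ‖V j l‖ ^ 2 := by
    rw [Finset.mul_sum]
    refine Finset.sum_le_sum fun l _ => ?_
    have hlt := l.isLt
    have hle : σ ⟨k - 1, by omega⟩ ≤ σ l := hdec (by simp [Fin.le_def]; omega)
    exact mul_le_mul_of_nonneg_right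
      (pow_le_pow_left₀ (le_of_lt (hσ _)) hle 2) (by positivity)
  rw [hcol j]
  exact arith_aux _ _ _ _ _ _ k hk hF (hσ _) (hσ _) (sq_nonneg _) hspec hS hnum
end

section
/- Let A be an m×n matrix of rank k and let R be a d×n matrix (a row submatrix of A after rescaling, so rank(R) ≤ rank(A)). If ‖A*A − R*R‖₂ < σ_k(A)², then rank(R) = k. -/
open Matrix

section Aux

lemma sorted_getElem_ge' (L : List ℝ) {i j : ℕ} (hij : i ≤ j)
    (hj : j < (L.insertionSort (· ≥ ·)).length) :
    (L.insertionSort (· ≥ ·))[j]'hj ≤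
      (L.insertionSort (· ≥ ·))[i]'(lt_of_le_of_lt hij hj) := by
  rcases eq_or_lt_of_le hij with rfl | hlt
  · exact le_refl _
  · exact List.pairwise_iff_getElem.mp (List.pairwise_insertionSort (· ≥ ·) L) i j _ hj hlt

lemma sorted_getD_zero_ge' (L : List ℝ) (x : ℝ) (hx : x ∈ L) :
    x ≤ (L.insertionSort (· ≥ ·)).getD 0 0 := by
  have hx' : x ∈ L.insertionSort (· ≥ ·) := ((List.perm_insertionSort (· ≥ ·) L).mem_iff).mpr hx
  obtain ⟨i, hi, rfl⟩ := List.mem_iff_getElem.mp hx'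
  have h0 : 0 < (L.insertionSort (· ≥ ·)).length := by omega
  rw [List.getD_eq_getElem _ _ h0]
  exact sorted_getElem_ge' L (Nat.zero_le i) hi

lemma countP_sorted_ge' (L : List ℝ) (k : ℕ) (hk : 1 ≤ k) (hkl : k - 1 < L.length) :
    k ≤ L.countP (fun x => decide ((L.insertionSort (· ≥ ·)).getD (k-1) 0 ≤ x)) := by
  set μ := (L.insertionSort (· ≥ ·)).getD (k-1) 0 with hμ
  set L' := L.insertionSort (· ≥ ·) with hL'
  have hlen : L'.length = L.length := (List.perm_insertionSort _ L).length_eq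
  have hcnt : L.countP (fun x => decide (μ ≤ x)) = L'.countP (fun x => decide (μ ≤ x)) :=
    ((List.perm_insertionSort (· ≥ ·) L).symm.countP_eq _)
  rw [hcnt]
  have hk1 : k - 1 < L'.length := by omega
  have htake : (L'.take k).countP (fun x => decide (μ ≤ x)) = (L'.take k).length := by
    apply List.countP_eq_length.mpr
    intro a ha
    obtain ⟨i, hi, rfl⟩ := List.mem_iff_getElem.mp ha
    rw [List.getElem_take]
    simp only [decide_eq_true_eq]
    have hik : i < k := by
      have := hi; simp [List.length_take] at this; omega
    have hil : i < L'.length := by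
      have := hi; simp [List.length_take] at this; omega
    have := sorted_getElem_ge' L (i := i) (j := k - 1) (by omega) (by rw [← hL']; omega)
    rw [hμ, List.getD_eq_getElem _ _ hk1]
    exact this
  have hsub : (L'.take k).countP (fun x => decide (μ ≤ x)) ≤ L'.countP (fun x => decide (μ ≤ x)) :=
    (List.take_sublist k L').countP_le
  have hlen' : (L'.take k).length = k := by
    simp [List.length_take]; omega
  omega

lemma countP_ofFn_card' {n : ℕ} (f : Fin n → ℝ) (μ : ℝ) :
    (List.ofFn f).countP (fun x => decide (μ ≤ x)) =
      (Finset.univ.filter (fun i => μ ≤ f i)).card := by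
  rw [List.ofFn_eq_map, List.countP_map, List.countP_eq_length_filter]
  rw [Finset.card_filter, Fin.univ_def]
  simp only [Finset.sum, Multiset.map_coe, Multiset.sum_coe]
  induction (List.finRange n) with
  | nil => simp
  | cons a l ih =>
      rw [List.filter_cons]
      by_cases hp : μ ≤ f a
      · simp [hp, ih]; omega
      · simp [hp, ih]

variable {𝕜 : Type*} [RCLike 𝕜]

lemma dot_star_self_eq' {n : ℕ} (x : Fin n → 𝕜) :
    star x ⬝ᵥ x = ((∑ i, ‖x i‖^2 : ℝ) : 𝕜) := by
  simp only [dotProduct, Pi.star_apply, RCLike.star_def, RCLike.conj_mul, RCLike.ofReal_sum]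
  push_cast
  rfl

lemma quadform_eigen' {n : ℕ} (C : Matrix (Fin n) (Fin n) 𝕜) (hC : C.IsHermitian)
    (x : Fin n → 𝕜) :
    star x ⬝ᵥ (C *ᵥ x) =
      ((∑ i, hC.eigenvalues i *
        ‖((star (hC.eigenvectorUnitary : Matrix (Fin n) (Fin n) 𝕜)) *ᵥ x) i‖^2 : ℝ) : 𝕜) := by
  set U : Matrix (Fin n) (Fin n) 𝕜 := (hC.eigenvectorUnitary : Matrix (Fin n) (Fin n) 𝕜) with hU
  set c : Fin n → 𝕜 := star U *ᵥ x with hc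
  have hxc : star x ᵥ* U = star c := by
    rw [hc, star_mulVec, Matrix.star_eq_conjTranspose, conjTranspose_conjTranspose]
  conv_lhs => rw [hC.spectral_theorem, Unitary.conjStarAlgAut_apply]
  rw [← hU, Matrix.mul_assoc, ← mulVec_mulVec, ← mulVec_mulVec, dotProduct_mulVec, hxc, ← hc]
  rw [show (diagonal (RCLike.ofReal ∘ hC.eigenvalues) *ᵥ c) =
      fun i => (hC.eigenvalues i : 𝕜) * c i by ext i; simp [mulVec_diagonal]]
  simp only [dotProduct, Pi.star_apply, RCLike.ofReal_sum]
  congr 1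
  ext i
  rw [show star (c i) * ((hC.eigenvalues i : 𝕜) * c i)
      = (hC.eigenvalues i : 𝕜) * (star (c i) * c i) by ring]
  rw [RCLike.star_def, RCLike.conj_mul]
  push_cast
  ring

lemma unitary_mulVec_norm' {n : ℕ} (C : Matrix (Fin n) (Fin n) 𝕜) (hC : C.IsHermitian)
    (x : Fin n → 𝕜) :
    ∑ i, ‖((star (hC.eigenvectorUnitary : Matrix (Fin n) (Fin n) 𝕜)) *ᵥ x) i‖^2
      = ∑ i, ‖x i‖^2 := by
  set U : Matrix (Fin n) (Fin n) 𝕜 := (hC.eigenvectorUnitary : Matrix (Fin n) (Fin n) 𝕜) with hU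
  set c : Fin n → 𝕜 := star U *ᵥ x with hc
  have hxc : star x ᵥ* U = star c := by
    rw [hc, star_mulVec, Matrix.star_eq_conjTranspose, conjTranspose_conjTranspose]
  have h1 : star c ⬝ᵥ c = star x ⬝ᵥ x := by
    rw [hc, ← hxc, ← dotProduct_mulVec, mulVec_mulVec]
    rw [show U * star U = 1 from (Matrix.mem_unitaryGroup_iff).mp hC.eigenvectorUnitary.2]
    rw [one_mulVec]
  have := congrArg RCLike.re h1
  rwa [dot_star_self_eq', dot_star_self_eq', RCLike.ofReal_re, RCLike.ofReal_re] at this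

lemma dot_cs' {n : ℕ} (x y : Fin n → 𝕜) :
    ‖star x ⬝ᵥ y‖ ≤ Real.sqrt (∑ i, ‖x i‖^2) * Real.sqrt (∑ i, ‖y i‖^2) := by
  let x' : EuclideanSpace 𝕜 (Fin n) := (WithLp.equiv 2 _).symm x
  let y' : EuclideanSpace 𝕜 (Fin n) := (WithLp.equiv 2 _).symm y
  have h1 : inner 𝕜 x' y' = star x ⬝ᵥ y := by
    rw [EuclideanSpace.inner_eq_star_dotProduct, dotProduct_comm]
    simp [x', y']
  have h2 := norm_inner_le_norm (𝕜 := 𝕜) x' y'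
  rw [h1] at h2
  have hx : ‖x'‖ = Real.sqrt (∑ i, ‖x i‖^2) := by rw [EuclideanSpace.norm_eq]; rfl
  have hy : ‖y'‖ = Real.sqrt (∑ i, ‖y i‖^2) := by rw [EuclideanSpace.norm_eq]; rfl
  rw [hx, hy] at h2
  exact h2

lemma exists_kernel_vec' {n d : ℕ} (R : Matrix (Fin d) (Fin n) 𝕜) (U : Matrix (Fin n) (Fin n) 𝕜)
    (S : Finset (Fin n)) (hcard : R.rank < S.card) :
    ∃ c : Fin n → 𝕜, c ≠ 0 ∧ (∀ j ∉ S, c j = 0) ∧ R *ᵥ (U *ᵥ c) = 0 := by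
  classical
  set ext : ({i // i ∈ S} → 𝕜) →ₗ[𝕜] (Fin n → 𝕜) :=
    Function.ExtendByZero.linearMap 𝕜 (Subtype.val : {i // i ∈ S} → Fin n) with hext
  set φ : ({i // i ∈ S} → 𝕜) →ₗ[𝕜] (Fin d → 𝕜) :=
    R.mulVecLin ∘ₗ (U.mulVecLin ∘ₗ ext) with hφ
  have hrange : LinearMap.range φ ≤ LinearMap.range R.mulVecLin := by
    rw [hφ]
    exact LinearMap.range_comp_le_range _ _
  have h1 : Module.finrank 𝕜 (LinearMap.range φ) ≤ R.rank := by
    rw [Matrix.rank]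
    exact Submodule.finrank_mono hrange
  have h2 : Module.finrank 𝕜 ({i // i ∈ S} → 𝕜) = S.card := by
    simp [Module.finrank_pi]
  have h3 := LinearMap.finrank_range_add_finrank_ker φ
  rw [h2] at h3
  have hker : LinearMap.ker φ ≠ ⊥ := by
    intro hbot
    rw [hbot] at h3
    simp at h3
    omega
  obtain ⟨c₀, hc₀mem, hc₀⟩ := Submodule.ne_bot_iff _ |>.mp hker
  have hval : ∀ i : {i // i ∈ S}, (ext c₀) i.val = c₀ i := by
    intro i
    exact Function.Injective.extend_apply Subtype.val_injective _ _ _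
  refine ⟨ext c₀, ?_, ?_, ?_⟩
  · intro h0
    apply hc₀
    ext i
    have := hval i
    rw [h0] at this
    simpa using this.symm
  · intro j hj
    have : ¬∃ i : {i // i ∈ S}, (i : Fin n) = j := by
      rintro ⟨i, rfl⟩; exact hj i.2
    exact Function.extend_apply' c₀ (0 : Fin n → 𝕜) j this
  · have := hc₀mem
    rw [LinearMap.mem_ker] at this
    simpa [hφ, Matrix.mulVecLin_apply] using this

end Aux

/-- If `‖AᴴA − RᴴR‖₂ < σ_k(A)²` and `rank R ≤ k = rank A`, then `rank R = k`. -/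
theorem stmt11 {𝕜 : Type*} [RCLike 𝕜] {m n d k : ℕ}
    (A : Matrix (Fin m) (Fin n) 𝕜) (hrank : A.rank = k)
    (R : Matrix (Fin d) (Fin n) 𝕜) (hle : R.rank ≤ k)
    (h : spec (Aᴴ * A - Rᴴ * R) < sval A k ^ 2) :
    R.rank = k := by
  rcases Nat.eq_zero_or_pos k with rfl | hk
  · omega
  refine le_antisymm hle (not_lt.mp ?_)
  intro hlt
  -- setup
  have hB : (Aᴴ * A).IsHermitian := Matrix.isHermitian_conjTranspose_mul_self A
  set B : Matrix (Fin n) (Fin n) 𝕜 := Aᴴ * A with hBdef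
  set ev : Fin n → ℝ := hB.eigenvalues with hev
  set L : List ℝ := List.ofFn ev with hL
  set L' : List ℝ := L.insertionSort (· ≥ ·) with hL'
  have hkn : k ≤ n := hrank ▸ A.rank_le_width
  have hlenL : L.length = n := by simp [hL]
  have hlenL' : L'.length = n := ((List.perm_insertionSort _ L).length_eq).trans hlenL
  have hk1 : k - 1 < L.length := by omega
  set μ : ℝ := L'.getD (k-1) 0 with hμdef
  have hμmem : μ ∈ L := by
    have h1 : k - 1 < L'.length := by omega
    rw [hμdef, List.getD_eq_getElem _ _ h1]
    exact ((List.perm_insertionSort (· ≥ ·) L).mem_iff).mp (List.getElem_mem h1)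
  have hμ0 : 0 ≤ μ := by
    obtain ⟨i, hi⟩ := List.mem_ofFn.mp (hL ▸ hμmem)
    rw [← hi]
    exact Matrix.eigenvalues_conjTranspose_mul_self_nonneg A i
  have hsval : sval A k ^ 2 = μ := by
    rw [sval]
    exact Real.sq_sqrt hμ0
  -- the top-k eigenvalue index set
  set S : Finset (Fin n) := Finset.univ.filter (fun i => μ ≤ ev i) with hS
  have hScard : k ≤ S.card := by
    have h1 := countP_sorted_ge' L k hk hk1
    rw [← hL'] at h1
    rw [hS, ← countP_ofFn_card' ev μ, ← hL]
    exact h1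
  -- the kernel vector
  set U : Matrix (Fin n) (Fin n) 𝕜 := (hB.eigenvectorUnitary : Matrix (Fin n) (Fin n) 𝕜) with hU
  obtain ⟨c, hc0, hcS, hRc⟩ := exists_kernel_vec' R U S (lt_of_lt_of_le hlt hScard)
  set x : Fin n → 𝕜 := U *ᵥ c with hx
  have hUc : star U *ᵥ x = c := by
    rw [hx, mulVec_mulVec]
    rw [show star U * U = 1 from (Matrix.mem_unitaryGroup_iff').mp hB.eigenvectorUnitary.2]
    rw [one_mulVec]
  set N : ℝ := ∑ i, ‖c i‖^2 with hN
  have hNpos : 0 < N := by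
    obtain ⟨i, hi⟩ := Function.ne_iff.mp hc0
    refine Finset.sum_pos' (fun j _ => by positivity) ⟨i, Finset.mem_univ i, pow_pos (norm_pos_iff.mpr hi) 2⟩
  have hxN : ∑ i, ‖x i‖^2 = N := by
    have := unitary_mulVec_norm' B hB x
    rw [← hU, hUc] at this
    rw [← this, hN]
  -- lower bound
  have hlow : μ * N ≤ RCLike.re (star x ⬝ᵥ (B *ᵥ x)) := by
    have hq := quadform_eigen' B hB x
    rw [← hU, hUc] at hq
    rw [hq, RCLike.ofReal_re, hN, Finset.mul_sum]
    apply Finset.sum_le_sum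
    intro i _
    by_cases hiS : i ∈ S
    · have : μ ≤ ev i := (Finset.mem_filter.mp hiS).2
      exact mul_le_mul_of_nonneg_right this (by positivity)
    · rw [hcS i hiS]
      simp
  -- the perturbation matrix
  set M : Matrix (Fin n) (Fin n) 𝕜 := B - Rᴴ * R with hM
  have hMx : M *ᵥ x = B *ᵥ x := by
    have hz : (Rᴴ * R) *ᵥ x = 0 := by
      rw [← mulVec_mulVec, hRc, mulVec_zero]
    rw [hM, sub_mulVec, hz, sub_zero]
  -- upper bound via spec
  have hC2 : (Mᴴ * M).IsHermitian := Matrix.isHermitian_conjTranspose_mul_self M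
  set t : ℝ := ((List.ofFn hC2.eigenvalues).insertionSort (· ≥ ·)).getD 0 0 with ht
  have hspec : spec M = Real.sqrt t := by rw [spec, sval, ht]
  have ht0 : 0 ≤ t := by
    have h1 : (0:ℕ) < ((List.ofFn hC2.eigenvalues).insertionSort (· ≥ ·)).length := by
      rw [(List.perm_insertionSort _ _).length_eq, List.length_ofFn]
      omega
    rw [ht, List.getD_eq_getElem _ _ h1]
    have hmem := ((List.perm_insertionSort (· ≥ ·) _).mem_iff).mp (List.getElem_mem h1)
    obtain ⟨i, hi⟩ := List.mem_ofFn.mp hmem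
    rw [← hi]
    exact Matrix.eigenvalues_conjTranspose_mul_self_nonneg M i
  have hspec2 : spec M ^ 2 = t := by rw [hspec]; exact Real.sq_sqrt ht0
  have hspec0 : 0 ≤ spec M := by rw [hspec]; exact Real.sqrt_nonneg t
  -- ∑ ‖(M *ᵥ x) i‖^2 ≤ t * N
  have hMx2 : ∑ i, ‖(M *ᵥ x) i‖^2 ≤ t * N := by
    have h1 : star (M *ᵥ x) ⬝ᵥ (M *ᵥ x) = star x ⬝ᵥ ((Mᴴ * M) *ᵥ x) := by
      rw [star_mulVec, ← dotProduct_mulVec, ← mulVec_mulVec, dotProduct_mulVec]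
    have h2 := quadform_eigen' (Mᴴ * M) hC2 x
    have h3 := congrArg RCLike.re (h1.trans h2)
    rw [dot_star_self_eq', RCLike.ofReal_re, RCLike.ofReal_re] at h3
    rw [h3]
    have h4 : ∑ i, ‖((star (hC2.eigenvectorUnitary : Matrix (Fin n) (Fin n) 𝕜)) *ᵥ x) i‖^2
        = N := by
      rw [unitary_mulVec_norm' (Mᴴ * M) hC2 x, hxN]
    calc ∑ i, hC2.eigenvalues i *
          ‖((star (hC2.eigenvectorUnitary : Matrix (Fin n) (Fin n) 𝕜)) *ᵥ x) i‖^2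
        ≤ ∑ i, t * ‖((star (hC2.eigenvectorUnitary : Matrix (Fin n) (Fin n) 𝕜)) *ᵥ x) i‖^2 := by
          apply Finset.sum_le_sum
          intro i _
          apply mul_le_mul_of_nonneg_right _ (by positivity)
          rw [ht]
          exact sorted_getD_zero_ge' _ _ (List.mem_ofFn.mpr ⟨i, rfl⟩)
      _ = t * N := by rw [← Finset.mul_sum, h4]
  have hub : RCLike.re (star x ⬝ᵥ (M *ᵥ x)) ≤ spec M * N := by
    calc RCLike.re (star x ⬝ᵥ (M *ᵥ x)) ≤ ‖star x ⬝ᵥ (M *ᵥ x)‖ := RCLike.re_le_norm _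
      _ ≤ Real.sqrt (∑ i, ‖x i‖^2) * Real.sqrt (∑ i, ‖(M *ᵥ x) i‖^2) := dot_cs' _ _
      _ ≤ Real.sqrt N * Real.sqrt (t * N) := by
          rw [hxN]
          exact mul_le_mul_of_nonneg_left (Real.sqrt_le_sqrt hMx2) (Real.sqrt_nonneg N)
      _ = spec M * N := by
          rw [Real.sqrt_mul ht0, ← hspec]
          rw [show Real.sqrt N * (spec M * Real.sqrt N)
              = spec M * (Real.sqrt N * Real.sqrt N) by ring]
          rw [Real.mul_self_sqrt hNpos.le]
  -- combine
  have hfinal : μ * N ≤ spec M * N := by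
    calc μ * N ≤ RCLike.re (star x ⬝ᵥ (B *ᵥ x)) := hlow
      _ = RCLike.re (star x ⬝ᵥ (M *ᵥ x)) := by rw [hMx]
      _ ≤ spec M * N := hub
  have hcontr : spec M * N < μ * N := by
    apply mul_lt_mul_of_pos_right _ hNpos
    rw [← hsval]
    exact h
  exact absurd (lt_of_le_of_lt hfinal hcontr) (lt_irrefl _)
end

section
/- Let à = A + E where A has rank k. Let Ã_k = W̃_k Σ̃_k Ṽ_k* be the rank-k truncated SVD of Ã, and let I ⊆ [m] with |I| = k. Then σ_k(Ã(I,:)) ≥ σ_k(W̃_k(I,:)) · σ_k(Ã). -/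
open Matrix

section Aux
variable {𝕜 : Type*} [RCLike 𝕜]
open scoped ComplexOrder


lemma sorted_getD_ge (c : ℝ) : ∀ (l : List ℝ), l.Pairwise (· ≥ ·) →
    ∀ j, j < l.countP (fun x => decide (c ≤ x)) → c ≤ l.getD j 0 := by
  intro l
  induction l with
  | nil => simp
  | cons a t ih =>
    intro hs j hj
    rw [List.countP_cons] at hj
    match j with
    | 0 =>
      simp only [List.getD_cons_zero]
      by_contra hac
      push_neg at hac
      have ht0 : t.countP (fun x => decide (c ≤ x)) = 0 := by
        rw [List.countP_eq_zero]
        intro x hx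
        have := (List.pairwise_cons.mp hs).1 x hx
        simp only [decide_eq_true_eq]
        push_neg
        linarith
      rw [ht0] at hj
      simp [hac, not_le.mpr hac] at hj
    | j + 1 =>
      simp only [List.getD_cons_succ]
      refine ih (List.pairwise_cons.mp hs).2 j ?_
      by_cases h : c ≤ a <;> simp [h] at hj <;> omega


lemma sorted_getD_le_of_mem (l : List ℝ) (hs : l.Pairwise (· ≥ ·))
    (x : ℝ) (hx : x ∈ l) : l.getD (l.length - 1) 0 ≤ x := by
  obtain ⟨i, rfl⟩ := List.mem_iff_get.mp hx
  have hl : 0 < l.length := i.pos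
  rw [List.getD_eq_getElem _ _ (by omega)]
  exact hs.rel_get_of_le (by rw [Fin.le_def]; simp; omega)

lemma sorted_getD_anti (l : List ℝ) (hs : l.Pairwise (· ≥ ·)) (i j : ℕ)
    (hij : i ≤ j) (hj : j < l.length) : l.getD j 0 ≤ l.getD i 0 := by
  rw [List.getD_eq_getElem _ _ hj, List.getD_eq_getElem _ _ (lt_of_le_of_lt hij hj)]
  exact hs.rel_get_of_le (by rw [Fin.le_def]; simpa using hij)

lemma countP_ofFn {n : ℕ} (f : Fin n → ℝ) (p : ℝ → Prop) [DecidablePred p] :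
    (List.ofFn f).countP (fun x => decide (p x)) = (Finset.univ.filter (fun i => p (f i))).card := by
  induction n with
  | zero => simp
  | succ n ih =>
    rw [List.ofFn_succ, List.countP_cons, ih (fun i => f i.succ)]
    rw [Fin.card_filter_univ_succ (p := fun i => p (f i))]
    by_cases h : p (f 0) <;> simp [h]

variable {𝕜 : Type*} [RCLike 𝕜]

lemma nsq_eq_re_dot {p : ℕ} (x : Fin p → 𝕜) :
    ∑ i, ‖x i‖^2 = RCLike.re (star x ⬝ᵥ x) := by
  rw [dotProduct, map_sum]
  congr 1; ext i
  rw [Pi.star_apply, RCLike.star_def, RCLike.conj_mul, ← RCLike.ofReal_pow, RCLike.ofReal_re]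

lemma dot_diag_re {p : ℕ} (d : Fin p → ℝ) (z : Fin p → 𝕜) :
    RCLike.re (star z ⬝ᵥ ((diagonal (RCLike.ofReal ∘ d) : Matrix (Fin p) (Fin p) 𝕜) *ᵥ z))
      = ∑ i, d i * ‖z i‖^2 := by
  rw [dotProduct, map_sum]
  congr 1; ext i
  rw [mulVec_diagonal]
  simp only [Pi.star_apply, RCLike.star_def, Function.comp_apply]
  rw [mul_comm ((RCLike.ofReal (d i) : 𝕜)) (z i), ← mul_assoc, RCLike.conj_mul]
  rw [← RCLike.ofReal_pow, ← RCLike.ofReal_mul, RCLike.ofReal_re, mul_comm]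

lemma qf_spectral {p : ℕ} {H : Matrix (Fin p) (Fin p) 𝕜} (hH : H.IsHermitian) (x : Fin p → 𝕜) :
    RCLike.re (star x ⬝ᵥ (H *ᵥ x)) =
      ∑ i, hH.eigenvalues i *
        ‖((star (hH.eigenvectorUnitary : Matrix (Fin p) (Fin p) 𝕜)) *ᵥ x) i‖^2 := by
  set U : Matrix (Fin p) (Fin p) 𝕜 := (hH.eigenvectorUnitary : Matrix (Fin p) (Fin p) 𝕜) with hU
  have key : star x ⬝ᵥ (H *ᵥ x)
      = star (star U *ᵥ x) ⬝ᵥ ((diagonal (RCLike.ofReal ∘ hH.eigenvalues) : Matrix (Fin p) (Fin p) 𝕜) *ᵥ (star U *ᵥ x)) := by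
    conv_lhs => rw [hH.spectral_theorem, Unitary.conjStarAlgAut_apply]
    rw [← mulVec_mulVec, ← mulVec_mulVec, dotProduct_mulVec (star x) U]
    congr 1
    rw [star_mulVec, star_eq_conjTranspose, conjTranspose_conjTranspose]
  rw [key, dot_diag_re]

lemma dot_self_unitary {p : ℕ} {U : Matrix (Fin p) (Fin p) 𝕜} (hU : U * star U = 1)
    (x : Fin p → 𝕜) :
    ∑ i, ‖(star U *ᵥ x) i‖^2 = ∑ i, ‖x i‖^2 := by
  rw [nsq_eq_re_dot, nsq_eq_re_dot]
  have h : star (star U *ᵥ x) ⬝ᵥ (star U *ᵥ x) = star x ⬝ᵥ x := by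
    rw [star_mulVec, star_eq_conjTranspose, conjTranspose_conjTranspose,
      ← dotProduct_mulVec (star x) U, mulVec_mulVec, ← star_eq_conjTranspose, hU, one_mulVec]
  rw [h]

lemma unitary_mul_star {p : ℕ} {H : Matrix (Fin p) (Fin p) 𝕜} (hH : H.IsHermitian) :
    (hH.eigenvectorUnitary : Matrix (Fin p) (Fin p) 𝕜) *
      star (hH.eigenvectorUnitary : Matrix (Fin p) (Fin p) 𝕜) = 1 :=
  Matrix.mem_unitaryGroup_iff.mp hH.eigenvectorUnitary.2

lemma qf_ge_min {p : ℕ} {G : Matrix (Fin p) (Fin p) 𝕜} (hG : G.IsHermitian) (lam : ℝ)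
    (hlam : ∀ i, lam ≤ hG.eigenvalues i) (w : Fin p → 𝕜) :
    lam * ∑ i, ‖w i‖^2 ≤ RCLike.re (star w ⬝ᵥ (G *ᵥ w)) := by
  rw [qf_spectral hG w, ← dot_self_unitary (unitary_mul_star hG) w, Finset.mul_sum]
  exact Finset.sum_le_sum fun i _ =>
    mul_le_mul_of_nonneg_right (hlam i) (by positivity)

lemma sum_normsq_pos {p : ℕ} {x : Fin p → 𝕜} (hx : x ≠ 0) : 0 < ∑ i, ‖x i‖^2 := by
  obtain ⟨i, hi⟩ : ∃ i, x i ≠ 0 := by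
    by_contra h; push_neg at h; exact hx (funext h)
  have h1 : 0 < ‖x i‖^2 := by have := norm_pos_iff.mpr hi; positivity
  exact lt_of_lt_of_le h1 (Finset.single_le_sum (f := fun i => ‖x i‖^2)
    (fun j _ => by positivity) (Finset.mem_univ i))

lemma key_card {n k : ℕ} (H : Matrix (Fin n) (Fin n) 𝕜) (hH : H.IsHermitian) (c : ℝ)
    (B : Matrix (Fin n) (Fin k) 𝕜) (hB : ∀ y, B *ᵥ y = 0 → y = 0)
    (hq : ∀ y : Fin k → 𝕜, c * (∑ i, ‖(B *ᵥ y) i‖^2) ≤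
        RCLike.re (star (B *ᵥ y) ⬝ᵥ (H *ᵥ (B *ᵥ y)))) :
    k ≤ (Finset.univ.filter fun i : Fin n => c ≤ hH.eigenvalues i).card := by
  classical
  by_contra hlt
  push_neg at hlt
  set U : Matrix (Fin n) (Fin n) 𝕜 := (hH.eigenvectorUnitary : Matrix (Fin n) (Fin n) 𝕜) with hU
  set P : Finset (Fin n) := Finset.univ.filter fun i => c ≤ hH.eigenvalues i with hP
  set C : Matrix P (Fin k) 𝕜 := Matrix.of (fun i y => ((star U * B)) i.1 y) with hC
  have hni : ¬ Function.Injective C.mulVecLin := by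
    intro h
    have h2 := LinearMap.finrank_le_finrank_of_injective h
    rw [Module.finrank_pi, Module.finrank_pi, Fintype.card_fin, Fintype.card_coe] at h2
    omega
  rw [← LinearMap.ker_eq_bot] at hni
  obtain ⟨y, hyk, hy0⟩ := (Submodule.ne_bot_iff _).mp hni
  have hyC : C *ᵥ y = 0 := hyk
  set x : Fin n → 𝕜 := B *ᵥ y with hxdef
  have hx0 : x ≠ 0 := fun h => hy0 (hB y h)
  set z : Fin n → 𝕜 := star U *ᵥ x with hz
  have hzP : ∀ i ∈ P, z i = 0 := by
    intro i hi
    have := congrFun hyC ⟨i, hi⟩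
    simpa [hC, Matrix.mulVec, Matrix.mul_apply, dotProduct, hz, hxdef,
      Finset.sum_mul, mul_assoc] using this
  have hUU : U * star U = 1 := unitary_mul_star hH
  have hzx : ∑ i, ‖z i‖^2 = ∑ i, ‖x i‖^2 := by
    rw [hz]; exact dot_self_unitary hUU x
  have hzsum : 0 < ∑ i, ‖z i‖^2 := by
    rw [hzx]; exact sum_normsq_pos hx0
  -- split sum over P and complement
  have hsplit : ∀ f : Fin n → ℝ, (∀ i ∈ P, f i = 0) → ∑ i, f i = ∑ i ∈ Pᶜ, f i := by
    intro f hf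
    rw [← Finset.sum_add_sum_compl P f, Finset.sum_eq_zero hf, zero_add]
  have hzc : 0 < ∑ i ∈ Pᶜ, ‖z i‖^2 := by
    rw [← hsplit _ (fun i hi => by rw [hzP i hi]; simp)]
    exact hzsum
  obtain ⟨i0, hi0c, hi0⟩ : ∃ i ∈ Pᶜ, 0 < ‖z i‖^2 := by
    by_contra hcon
    push_neg at hcon
    have : ∑ i ∈ Pᶜ, ‖z i‖^2 ≤ 0 :=
      Finset.sum_nonpos fun i hi => hcon i hi
    linarith
  have hlt2 : RCLike.re (star x ⬝ᵥ (H *ᵥ x)) < c * ∑ i, ‖x i‖^2 := by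
    rw [qf_spectral hH x, ← hz]
    have h1 : ∑ i, hH.eigenvalues i * ‖z i‖^2 = ∑ i ∈ Pᶜ, hH.eigenvalues i * ‖z i‖^2 :=
      hsplit _ (fun i hi => by rw [hzP i hi]; simp)
    have h2 : ∑ i, ‖x i‖^2 = ∑ i ∈ Pᶜ, ‖z i‖^2 := by
      rw [← hzx]
      exact hsplit _ (fun i hi => by rw [hzP i hi]; simp)
    rw [h1, h2, Finset.mul_sum]
    refine Finset.sum_lt_sum (fun i hi => ?_) ⟨i0, hi0c, ?_⟩
    · have : hH.eigenvalues i < c := by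
        simp only [hP, Finset.mem_compl, Finset.mem_filter, Finset.mem_univ, true_and] at hi
        linarith [lt_of_not_ge hi]
      exact mul_le_mul_of_nonneg_right this.le (by positivity)
    · have : hH.eigenvalues i0 < c := by
        simp only [hP, Finset.mem_compl, Finset.mem_filter, Finset.mem_univ, true_and] at hi0c
        linarith [lt_of_not_ge hi0c]
      exact mul_lt_mul_of_pos_right this hi0
  exact absurd (hq y) (not_le.mpr hlt2)

noncomputable def svlist {a b : ℕ} (A : Matrix (Fin a) (Fin b) 𝕜) : List ℝ :=
  (List.ofFn (Matrix.isHermitian_conjTranspose_mul_self A).eigenvalues).insertionSort (· ≥ ·)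

lemma svlist_sorted {a b : ℕ} (A : Matrix (Fin a) (Fin b) 𝕜) :
    (svlist A).Pairwise (· ≥ ·) := List.pairwise_insertionSort _ _

lemma svlist_length {a b : ℕ} (A : Matrix (Fin a) (Fin b) 𝕜) :
    (svlist A).length = b := by
  rw [svlist, List.length_insertionSort, List.length_ofFn]

lemma svlist_mem {a b : ℕ} (A : Matrix (Fin a) (Fin b) 𝕜) (x : ℝ) (hx : x ∈ svlist A) :
    ∃ i, (Matrix.isHermitian_conjTranspose_mul_self A).eigenvalues i = x := by
  have := (List.perm_insertionSort (· ≥ ·) _).mem_iff.mp hx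
  rwa [List.mem_ofFn] at this

lemma svlist_nonneg {a b : ℕ} (A : Matrix (Fin a) (Fin b) 𝕜) (x : ℝ) (hx : x ∈ svlist A) :
    0 ≤ x := by
  obtain ⟨i, hi⟩ := svlist_mem A x hx
  rw [← hi]
  exact (Matrix.posSemidef_conjTranspose_mul_self A).eigenvalues_nonneg i

lemma svlist_getD_nonneg {a b : ℕ} (A : Matrix (Fin a) (Fin b) 𝕜) (j : ℕ) :
    0 ≤ (svlist A).getD j 0 := by
  by_cases hj : j < (svlist A).length
  · rw [List.getD_eq_getElem _ _ hj]
    exact svlist_nonneg A _ (List.getElem_mem hj)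
  · rw [List.getD_eq_default _ _ (le_of_not_gt hj)]

lemma normsq_mulVec {a b : ℕ} (M : Matrix (Fin a) (Fin b) 𝕜) (x : Fin b → 𝕜) :
    ∑ i, ‖(M *ᵥ x) i‖^2 = RCLike.re (star x ⬝ᵥ ((Mᴴ * M) *ᵥ x)) := by
  rw [nsq_eq_re_dot]
  congr 1
  rw [star_mulVec, ← dotProduct_mulVec, mulVec_mulVec]

lemma sval_eq' {a b : ℕ} (A : Matrix (Fin a) (Fin b) 𝕜) (j : ℕ) :
    sval A j = Real.sqrt ((svlist A).getD (j-1) 0) := rfl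

end Aux

/-- `σ_k(Ã(I,:)) ≥ σ_k(W̃_k(I,:)) · σ_k(Ã)` for the full SVD `Ã = W̃ Σ̃ Ṽᴴ`. -/
theorem stmt13 {𝕜 : Type*} [RCLike 𝕜] {m n k : ℕ} (hk : 0 < k) (hkm : k ≤ m)
    (A E : Matrix (Fin m) (Fin n) 𝕜) (hrank : A.rank = k)
    (W : Matrix (Fin m) (Fin m) 𝕜) (V : Matrix (Fin n) (Fin n) 𝕜)
    (hW : Wᴴ * W = 1 ∧ W * Wᴴ = 1) (hV : Vᴴ * V = 1 ∧ V * Vᴴ = 1)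
    (S : Matrix (Fin m) (Fin n) 𝕜)
    (hS : ∀ i j, S i j = if (i : ℕ) = (j : ℕ) then ((sval (A + E) ((i : ℕ) + 1) : ℝ) : 𝕜) else 0)
    (hSVD : A + E = W * S * Vᴴ)
    (ι : Fin k → Fin m) (hι : Function.Injective ι) :
    sval ((A + E).submatrix ι id) k ≥
      sval (W.submatrix ι (fun j : Fin k => Fin.castLE hkm j)) k * sval (A + E) k := by

  classical
  by_cases hkn : k ≤ n
  case neg =>
    -- σ_k(Atil) = 0 since the list has length n < k
    have h0 : sval (A + E) k = 0 := by
      rw [sval_eq', List.getD_eq_default _ _ (by rw [svlist_length]; omega), Real.sqrt_zero]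
    rw [h0, mul_zero]
    exact Real.sqrt_nonneg _
  case pos =>
  set Atil := A + E with hAtil
  set M := Atil.submatrix ι id with hM
  set Wsub := W.submatrix ι (fun j : Fin k => Fin.castLE hkm j) with hWsub
  set B := V.submatrix id (fun j : Fin k => Fin.castLE hkn j) with hB
  set σ : ℕ → ℝ := fun j => sval Atil j with hσ
  set D : Matrix (Fin k) (Fin k) 𝕜 :=
    Matrix.diagonal (fun j : Fin k => ((σ (j.1+1) : ℝ) : 𝕜)) with hD
  -- facts about σ
  have hσ_nonneg : ∀ j, 0 ≤ σ j := fun j => Real.sqrt_nonneg _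
  have hσ_anti : ∀ j : Fin k, σ k ≤ σ (j.1+1) := by
    intro j
    rw [hσ]
    simp only [sval_eq']
    apply Real.sqrt_le_sqrt
    apply sorted_getD_anti _ (svlist_sorted Atil) _ _ (by omega)
    rw [svlist_length]; omega
  -- B has orthonormal columns
  have hBB : Bᴴ * B = 1 := by
    ext i j
    have h : (Bᴴ * B) i j = (Vᴴ * V) (Fin.castLE hkn i) (Fin.castLE hkn j) := by
      simp [Matrix.mul_apply, Matrix.conjTranspose_apply, Matrix.submatrix_apply, hB]
    rw [h, hV.1]
    by_cases hij : i = j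
    · simp [hij, Matrix.one_apply]
    · have : (Fin.castLE hkn i) ≠ (Fin.castLE hkn j) :=
        fun h => hij (Fin.castLE_injective hkn h)
      simp [Matrix.one_apply, hij, this]
  have hBinj : ∀ y, B *ᵥ y = 0 → y = 0 := by
    intro y hy
    have h : (Bᴴ * B) *ᵥ y = 0 := by rw [← mulVec_mulVec, hy, mulVec_zero]
    rwa [hBB, one_mulVec] at h
  have hBnorm : ∀ y : Fin k → 𝕜, ∑ i, ‖(B *ᵥ y) i‖^2 = ∑ j, ‖y j‖^2 := by
    intro y
    rw [nsq_eq_re_dot, nsq_eq_re_dot]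
    congr 1
    rw [star_mulVec, ← dotProduct_mulVec, mulVec_mulVec, hBB, one_mulVec]
  -- M * B = Wsub * D
  have hMB : M * B = Wsub * D := by
    have h1 : M * B = (Atil * V).submatrix ι (fun j : Fin k => Fin.castLE hkn j) := by
      ext i j
      simp [Matrix.mul_apply, Matrix.submatrix_apply, hM, hB]
    have h2 : Atil * V = W * S := by
      rw [hSVD, Matrix.mul_assoc (W*S), hV.1, Matrix.mul_one]
    rw [h1, h2]
    ext i j
    rw [Matrix.submatrix_apply, Matrix.mul_apply, Matrix.mul_diagonal]
    rw [Finset.sum_eq_single (Fin.castLE hkm j)]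
    · have heq : ((Fin.castLE hkm j : Fin m) : ℕ) = ((Fin.castLE hkn j : Fin n) : ℕ) := by simp
      rw [hS, if_pos heq, hWsub]
      simp [Matrix.submatrix_apply, hσ]
    · intro s _ hs
      have hne : (s : ℕ) ≠ ((Fin.castLE hkn j : Fin n) : ℕ) := by
        simp only [Fin.coe_castLE]
        exact fun hc => hs (Fin.ext (by simpa using hc))
      rw [hS, if_neg hne, mul_zero]
    · simp
  -- λ_min of Wsubᴴ Wsub
  set lam : ℝ := (svlist Wsub).getD (k-1) 0 with hlam
  have hlam0 : 0 ≤ lam := svlist_getD_nonneg _ _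
  have hlam_le : ∀ i, lam ≤ (Matrix.isHermitian_conjTranspose_mul_self Wsub).eigenvalues i := by
    intro i
    have hmem : (Matrix.isHermitian_conjTranspose_mul_self Wsub).eigenvalues i ∈ svlist Wsub := by
      rw [svlist, (List.perm_insertionSort (· ≥ ·) _).mem_iff, List.mem_ofFn]
      exact ⟨i, rfl⟩
    have := sorted_getD_le_of_mem _ (svlist_sorted Wsub) _ hmem
    rwa [svlist_length] at this
  -- the quadratic form bound
  set c : ℝ := lam * (σ k)^2 with hc
  have hq : ∀ y : Fin k → 𝕜, c * (∑ i, ‖(B *ᵥ y) i‖^2) ≤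
      RCLike.re (star (B *ᵥ y) ⬝ᵥ ((Mᴴ * M) *ᵥ (B *ᵥ y))) := by
    intro y
    rw [← normsq_mulVec M (B *ᵥ y), mulVec_mulVec, hMB, ← mulVec_mulVec,
      normsq_mulVec Wsub (D *ᵥ y)]
    have step1 : lam * ∑ j, ‖(D *ᵥ y) j‖^2 ≤
        RCLike.re (star (D *ᵥ y) ⬝ᵥ ((Wsubᴴ * Wsub) *ᵥ (D *ᵥ y))) :=
      qf_ge_min (Matrix.isHermitian_conjTranspose_mul_self Wsub) lam hlam_le (D *ᵥ y)
    have hDsq : ∀ j, ‖(D *ᵥ y) j‖^2 = (σ (j.1+1))^2 * ‖y j‖^2 := by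
      intro j
      rw [hD, Matrix.mulVec_diagonal, norm_mul, RCLike.norm_ofReal,
        abs_of_nonneg (hσ_nonneg _), mul_pow]
    have step2 : (σ k)^2 * ∑ j, ‖y j‖^2 ≤ ∑ j, ‖(D *ᵥ y) j‖^2 := by
      rw [Finset.mul_sum]
      apply Finset.sum_le_sum
      intro j _
      rw [hDsq j]
      apply mul_le_mul_of_nonneg_right _ (by positivity)
      exact pow_le_pow_left₀ (hσ_nonneg k) (hσ_anti j) 2
    calc c * (∑ i, ‖(B *ᵥ y) i‖^2) = lam * ((σ k)^2 * ∑ j, ‖y j‖^2) := by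
          rw [hBnorm y, hc]; ring
      _ ≤ lam * ∑ j, ‖(D *ᵥ y) j‖^2 := mul_le_mul_of_nonneg_left step2 hlam0
      _ ≤ _ := step1
  -- apply the min-max counting lemma
  have hcard := key_card (Mᴴ * M) (Matrix.isHermitian_conjTranspose_mul_self M) c B hBinj hq
  have hcount : k ≤ (svlist M).countP (fun x => decide (c ≤ x)) := by
    rw [svlist, (List.perm_insertionSort (· ≥ ·) _).countP_eq,
      countP_ofFn _ (fun x => c ≤ x)]
    exact hcard
  have hgetD : c ≤ (svlist M).getD (k-1) 0 :=
    sorted_getD_ge c _ (svlist_sorted M) (k-1) (by omega)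
  -- conclude
  have hfinal : Real.sqrt c ≤ sval M k := by
    rw [sval_eq']
    exact Real.sqrt_le_sqrt hgetD
  have hsqrtc : Real.sqrt c = sval Wsub k * σ k := by
    rw [hc, Real.sqrt_mul hlam0, Real.sqrt_sq (hσ_nonneg k), sval_eq', hlam]
  rw [ge_iff_le, ← hsqrtc]
  exact hfinal
end

section
/- Let A ∈ 𝕂^{m×n} have rank k. If index multisets I ⊆ [m] and J ⊆ [n] (with repetitions allowed) satisfy rank(A(I₀,J₀)) = k where I₀, J₀ are I, J with repetitions removed, then also rank(A(I,J)) = k and A = A(:,J) A(I,J)⁺ A(I,:). -/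
open Matrix

section helpers
variable {𝕜 : Type*} [RCLike 𝕜]

lemma my_submatrix_row_eq {l m n : Type*} [Fintype m] [DecidableEq m]
    (A : Matrix m n 𝕜) (f : l → m) :
    A.submatrix f id = (1 : Matrix m m 𝕜).submatrix f id * A := by
  ext i j
  simp [mul_apply, one_apply]

lemma my_submatrix_col_eq {m n q : Type*} [Fintype n] [DecidableEq n]
    (A : Matrix m n 𝕜) (g : q → n) :
    A.submatrix id g = A * (1 : Matrix n n 𝕜).submatrix id g := by
  ext i j
  simp [mul_apply, one_apply]

lemma my_range_mul_le {l m n : Type*} [Fintype m] [Fintype n]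
    (A : Matrix l m 𝕜) (B : Matrix m n 𝕜) :
    LinearMap.range (A * B).mulVecLin ≤ LinearMap.range A.mulVecLin := by
  rw [Matrix.mulVecLin_mul]
  exact LinearMap.range_comp_le_range _ _

lemma my_exists_col_factor {m p q : Type*} [Fintype m] [Fintype p] [Fintype q] [DecidableEq q]
    (C : Matrix m p 𝕜) (A : Matrix m q 𝕜)
    (h : LinearMap.range A.mulVecLin ≤ LinearMap.range C.mulVecLin) :
    ∃ Y : Matrix p q 𝕜, A = C * Y := by
  have h' : ∀ j, ∃ y : p → 𝕜, C *ᵥ y = A *ᵥ Pi.single j 1 := fun j =>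
    h ⟨Pi.single j 1, rfl⟩
  choose y hy using h'
  refine ⟨Matrix.of fun t j => y j t, ?_⟩
  ext i j
  have := congrFun (hy j) i
  simp only [Matrix.mulVec_single_one] at this
  simp only [Matrix.mulVec, dotProduct, Matrix.transpose_apply] at this
  simp [mul_apply, this]

/-- submatrix rank bound for arbitrary row/column selections -/
lemma my_rank_submatrix_le {m n p q : Type*} [Fintype m] [Fintype n] [Fintype p] [Fintype q]
    [DecidableEq m] [DecidableEq n]
    (A : Matrix m n 𝕜) (f : p → m) (g : q → n) :
    (A.submatrix f g).rank ≤ A.rank := by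
  have h1 : A.submatrix f g = (A.submatrix f id).submatrix id g := by
    simp [Matrix.submatrix_submatrix]
  rw [h1, my_submatrix_col_eq]
  refine le_trans (Matrix.rank_mul_le_left _ _) ?_
  rw [my_submatrix_row_eq]
  exact Matrix.rank_mul_le_right _ _
end helpers

/-- If the submatrix on the deduplicated index sets has rank `k = rank A`, then the
submatrix with repetitions also has rank `k` and `A = C U⁺ R`. -/
theorem stmt17 {𝕜 : Type*} [RCLike 𝕜] {m n k d₁ d₂ : ℕ}
    (A : Matrix (Fin m) (Fin n) 𝕜) (hrank : A.rank = k)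
    (ι : Fin d₁ → Fin m) (η : Fin d₂ → Fin n)
    (h₀ : (A.submatrix (fun i : {i // i ∈ Finset.univ.image ι} => i.1)
        (fun j : {j // j ∈ Finset.univ.image η} => j.1)).rank = k)
    (Up : Matrix (Fin d₂) (Fin d₁) 𝕜) (hUp : IsMoorePenrose (A.submatrix ι η) Up) :
    (A.submatrix ι η).rank = k ∧ A = A.submatrix id η * Up * A.submatrix ι id := by
  classical
  set U := A.submatrix ι η with hUdef
  set R := A.submatrix ι id with hRdef
  set C := A.submatrix id η with hCdef
  -- preimage choices for the dedup index sets
  have hσ : ∀ x : {i // i ∈ Finset.univ.image ι}, ∃ a, ι a = x.1 := by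
    rintro ⟨x, hx⟩
    obtain ⟨a, -, ha⟩ := Finset.mem_image.mp hx
    exact ⟨a, ha⟩
  have hτ : ∀ x : {j // j ∈ Finset.univ.image η}, ∃ a, η a = x.1 := by
    rintro ⟨x, hx⟩
    obtain ⟨a, -, ha⟩ := Finset.mem_image.mp hx
    exact ⟨a, ha⟩
  choose σ hσ using hσ
  choose τ hτ using hτ
  have hD : A.submatrix (fun i : {i // i ∈ Finset.univ.image ι} => i.1)
      (fun j : {j // j ∈ Finset.univ.image η} => j.1) = U.submatrix σ τ := by
    ext x y
    simp [hUdef, hσ, hτ]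
  -- rank facts
  have hUC : U = C.submatrix ι id := by simp [hUdef, hCdef, Matrix.submatrix_submatrix]
  have hUR : U = R.submatrix id η := by simp [hUdef, hRdef, Matrix.submatrix_submatrix]
  have hkU : k ≤ U.rank := by
    rw [← h₀, hD]
    convert my_rank_submatrix_le U σ τ using 2
  have hUk : U.rank ≤ k := by
    rw [← hrank]; exact my_rank_submatrix_le A ι η
  have hUrank : U.rank = k := le_antisymm hUk hkU
  have hCrank : C.rank = k := by
    refine le_antisymm ?_ ?_
    · rw [← hrank]; exact my_rank_submatrix_le A id η
    · rw [← hUrank, hUC, my_submatrix_row_eq]; exact Matrix.rank_mul_le_right _ _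
  have hRrank : R.rank = k := by
    refine le_antisymm ?_ ?_
    · rw [← hrank]; exact my_rank_submatrix_le A ι id
    · rw [← hUrank, hUR, my_submatrix_col_eq]; exact Matrix.rank_mul_le_left _ _
  -- column space equality : range C = range A
  have hCle : LinearMap.range C.mulVecLin ≤ LinearMap.range A.mulVecLin := by
    rw [hCdef, my_submatrix_col_eq]; exact my_range_mul_le _ _
  have hCeq : LinearMap.range C.mulVecLin = LinearMap.range A.mulVecLin := by
    refine Submodule.eq_of_le_of_finrank_le hCle ?_
    show A.rank ≤ C.rank
    rw [hrank, hCrank]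
  obtain ⟨Y, hY⟩ := my_exists_col_factor C A hCeq.ge
  -- row space equality via transposes
  have hRTle : LinearMap.range Rᵀ.mulVecLin ≤ LinearMap.range Aᵀ.mulVecLin := by
    have : Rᵀ = Aᵀ.submatrix id ι := by rw [hRdef, Matrix.transpose_submatrix]
    rw [this, my_submatrix_col_eq]; exact my_range_mul_le _ _
  have hRTeq : LinearMap.range Rᵀ.mulVecLin = LinearMap.range Aᵀ.mulVecLin := by
    refine Submodule.eq_of_le_of_finrank_le hRTle ?_
    show Aᵀ.rank ≤ Rᵀ.rank
    rw [Matrix.rank_transpose, Matrix.rank_transpose, hrank, hRrank]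
  obtain ⟨X', hX'⟩ := my_exists_col_factor Rᵀ Aᵀ hRTeq.ge
  have hX : A = X'ᵀ * R := by
    have := congrArg Matrix.transpose hX'
    rwa [Matrix.transpose_transpose, Matrix.transpose_mul, Matrix.transpose_transpose] at this
  set X := X'ᵀ
  -- key identities
  have hCU : C = X * U := by
    rw [hCdef, my_submatrix_col_eq A η, hX, Matrix.mul_assoc, ← my_submatrix_col_eq R η, ← hUR]
  have hRU : R = U * Y := by
    rw [hRdef, my_submatrix_row_eq A ι, hY, ← Matrix.mul_assoc, ← my_submatrix_row_eq C ι, ← hUC]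
  refine ⟨hUrank, ?_⟩
  calc A = X * (U * Y) := by rw [← hRU, ← hX]
    _ = X * (U * Up * U * Y) := by rw [hUp.1]
    _ = C * Up * R := by
        rw [hCU, hRU]
        simp only [Matrix.mul_assoc]
end
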